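/- Every SNEL derivation from T to R can be transformed into a derivation of the shape: from T, a derivation using only e↓, then the remaining derivation using only rules in SNEL \ {e↓, e↑}, then a derivation using only e↑, ending in R. (All instances of e↓ can be permuted to the top and all instances of e↑ to the bottom.) -/
import Mathlib


/-!
Deep-inference presentation of NEL (non-commutative exponential linear logic),
following "A System of Interaction and Structure IV: The Exponentials and Decomposition".
-/

/-- NEL structures: atoms (with a polarity), the unit ∘, par ⅋, tensor ⊗,
seq ◁, and the modalities ? and !. -/
inductive Str : Type
  | atom : ℕ → Bool → Str
  | unit : Str
  | par : Str → Str → Str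
  | ten : Str → Str → Str
  | seq : Str → Str → Str
  | quest : Str → Str
  | bang : Str → Str

namespace Str

/-- De Morgan negation, pushed to the atoms; seq does not swap its arguments. -/
def neg : Str → Str
  | atom n b => atom n (!b)
  | unit => unit
  | par a b => ten (neg a) (neg b)
  | ten a b => par (neg a) (neg b)
  | seq a b => seq (neg a) (neg b)
  | quest a => bang (neg a)
  | bang a => quest (neg a)

/-- The syntactic equivalence `=` on NEL structures: associativity of ⅋, ⊗, ◁,
commutativity of ⅋ and ⊗, unit laws for ∘, and contextual closure. -/
inductive Equiv : Str → Str → Prop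
  | refl (a) : Equiv a a
  | symm {a b} : Equiv a b → Equiv b a
  | trans {a b c} : Equiv a b → Equiv b c → Equiv a c
  | parAssoc (a b c) : Equiv (par (par a b) c) (par a (par b c))
  | tenAssoc (a b c) : Equiv (ten (ten a b) c) (ten a (ten b c))
  | seqAssoc (a b c) : Equiv (seq (seq a b) c) (seq a (seq b c))
  | parComm (a b) : Equiv (par a b) (par b a)
  | tenComm (a b) : Equiv (ten a b) (ten b a)
  | parUnit (a) : Equiv (par unit a) a
  | tenUnit (a) : Equiv (ten unit a) a
  | seqUnitL (a) : Equiv (seq unit a) a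
  | seqUnitR (a) : Equiv (seq a unit) a
  | parCongr {a a' b b'} : Equiv a a' → Equiv b b' → Equiv (par a b) (par a' b')
  | tenCongr {a a' b b'} : Equiv a a' → Equiv b b' → Equiv (ten a b) (ten a' b')
  | seqCongr {a a' b b'} : Equiv a a' → Equiv b b' → Equiv (seq a b) (seq a' b')
  | questCongr {a a'} : Equiv a a' → Equiv (quest a) (quest a')
  | bangCongr {a a'} : Equiv a a' → Equiv (bang a) (bang a')

end Str

/-- Contexts: structures with a hole that is not in the scope of a negation. -/
inductive Ctx : Type
  | hole
  | parL (C : Ctx) (T : Str)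
  | parR (T : Str) (C : Ctx)
  | tenL (C : Ctx) (T : Str)
  | tenR (T : Str) (C : Ctx)
  | seqL (C : Ctx) (T : Str)
  | seqR (T : Str) (C : Ctx)
  | quest (C : Ctx)
  | bang (C : Ctx)

/-- Plugging a structure into the hole of a context. -/
def Ctx.fill : Ctx → Str → Str
  | .hole, R => R
  | .parL C T, R => .par (C.fill R) T
  | .parR T C, R => .par T (C.fill R)
  | .tenL C T, R => .ten (C.fill R) T
  | .tenR T C, R => .ten T (C.fill R)
  | .seqL C T, R => .seq (C.fill R) T
  | .seqR T C, R => .seq T (C.fill R)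
  | .quest C, R => .quest (C.fill R)
  | .bang C, R => .bang (C.fill R)

/-- A set of (instances of) inference rules, given as a relation
from premise to conclusion. -/
abbrev Rules := Str → Str → Prop

/-- An instance of a rule of `r` applied deep inside a context. -/
def DeepStep (r : Rules) (P Q : Str) : Prop :=
  ∃ (C : Ctx) (a b : Str), r a b ∧ P = C.fill a ∧ Q = C.fill b

/-- A single inference step: a deep rule application, modulo the
syntactic equivalence on premise and conclusion. -/
def Step (r : Rules) (P Q : Str) : Prop :=
  ∃ P' Q', Str.Equiv P P' ∧ DeepStep r P' Q' ∧ Str.Equiv Q' Q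

/-- A derivation in the system `r` from premise `T` (top) to conclusion `R`
(bottom): a finite chain of inference steps modulo syntactic equivalence. -/
def Deriv (r : Rules) (T R : Str) : Prop :=
  Str.Equiv T R ∨ Relation.TransGen (Step r) T R

/- The rules of SNEL, written premise → conclusion (read downwards). -/

/-- atomic interaction ai↓ : S{∘} → S⟨a ⅋ ā⟩ -/
inductive aiDown : Str → Str → Prop
  | mk (n : ℕ) (b : Bool) : aiDown .unit (.par (.atom n b) (.atom n (!b)))

/-- atomic cut ai↑ : S⟨a ⊗ ā⟩ → S{∘} -/
inductive aiUp : Str → Str → Prop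
  | mk (n : ℕ) (b : Bool) : aiUp (.ten (.atom n b) (.atom n (!b))) .unit

/-- switch s : S⟨(R ⅋ U) ⊗ T⟩ → S⟨(R ⊗ T) ⅋ U⟩ -/
inductive sw : Str → Str → Prop
  | mk (R U T : Str) : sw (.ten (.par R U) T) (.par (.ten R T) U)

/-- seq q↓ : S⟨(R ◁ T) ⅋ (U ◁ V)⟩ → S⟨(R ⅋ U) ◁ (T ⅋ V)⟩ -/
inductive qDown : Str → Str → Prop
  | mk (R T U V : Str) :
      qDown (.par (.seq R T) (.seq U V)) (.seq (.par R U) (.par T V))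

/-- coseq q↑ : S⟨(R ⊗ T) ◁ (U ⊗ V)⟩ → S⟨(R ◁ U) ⊗ (T ◁ V)⟩ -/
inductive qUp : Str → Str → Prop
  | mk (R T U V : Str) :
      qUp (.seq (.ten R T) (.ten U V)) (.ten (.seq R U) (.seq T V))

/-- promotion p↓ : S{!(R ⅋ T)} → S⟨!R ⅋ ?T⟩ -/
inductive pDown : Str → Str → Prop
  | mk (R T : Str) : pDown (.bang (.par R T)) (.par (.bang R) (.quest T))

/-- copromotion p↑ : S⟨?T ⊗ !R⟩ → S{?(T ⊗ R)} -/
inductive pUp : Str → Str → Prop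
  | mk (T R : Str) : pUp (.ten (.quest T) (.bang R)) (.quest (.ten T R))

/-- empty e↓ : S{∘} → S{!∘} -/
inductive eDown : Str → Str → Prop
  | mk : eDown .unit (.bang .unit)

/-- coempty e↑ : S{?∘} → S{∘} -/
inductive eUp : Str → Str → Prop
  | mk : eUp (.quest .unit) .unit

/-- weakening w↓ : S{∘} → S{?R} -/
inductive wDown : Str → Str → Prop
  | mk (R : Str) : wDown .unit (.quest R)

/-- coweakening w↑ : S{!R} → S{∘} -/
inductive wUp : Str → Str → Prop
  | mk (R : Str) : wUp (.bang R) .unit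

/-- absorption b↓ : S⟨?R ⅋ R⟩ → S{?R} -/
inductive bDown : Str → Str → Prop
  | mk (R : Str) : bDown (.par (.quest R) R) (.quest R)

/-- coabsorption b↑ : S{!R} → S⟨!R ⊗ R⟩ -/
inductive bUp : Str → Str → Prop
  | mk (R : Str) : bUp (.bang R) (.ten (.bang R) R)

/-- digging g↓ : S{??R} → S{?R} -/
inductive gDown : Str → Str → Prop
  | mk (R : Str) : gDown (.quest (.quest R)) (.quest R)

/-- codigging g↑ : S{!R} → S{!!R} -/
inductive gUp : Str → Str → Prop
  | mk (R : Str) : gUp (.bang R) (.bang (.bang R))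

/-- general interaction i↓ : S{∘} → S⟨R ⅋ R̄⟩ -/
inductive iDown : Str → Str → Prop
  | mk (R : Str) : iDown .unit (.par R R.neg)

/-- general cut i↑ : S⟨R ⊗ R̄⟩ → S{∘} -/
inductive iUp : Str → Str → Prop
  | mk (R : Str) : iUp (.ten R R.neg) .unit

/-- The unit axiom ∘↓ of NEL.  It has no premise; within a derivation
(which always has a premise) it can therefore only act vacuously, which
we model by the trivial rewrite ∘ → ∘. -/
inductive unitAx : Str → Str → Prop
  | mk : unitAx .unit .unit

/-- System SNEL. -/
def snel : Rules :=
  aiDown ⊔ aiUp ⊔ sw ⊔ qDown ⊔ qUp ⊔ pDown ⊔ pUp ⊔ eDown ⊔ eUp ⊔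
    wDown ⊔ wUp ⊔ bDown ⊔ bUp ⊔ gDown ⊔ gUp

/-- The down fragment of SNEL together with the unit axiom: system NEL. -/
def nel : Rules :=
  unitAx ⊔ aiDown ⊔ sw ⊔ qDown ⊔ pDown ⊔ eDown ⊔ wDown ⊔ bDown ⊔ gDown

/-- The system {s, q↓, q↑}. -/
def swq : Rules := sw ⊔ qDown ⊔ qUp

/-- The hard core SNELh = {s, q↓, q↑, p↓, p↑}. -/
def snelh : Rules := sw ⊔ qDown ⊔ qUp ⊔ pDown ⊔ pUp

/-! ### Infrastructure -/

namespace Str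

lemma Equiv.parUnitR (a : Str) : Equiv (par a unit) a :=
  (Equiv.parComm a unit).trans (Equiv.parUnit a)

lemma Equiv.tenUnitR (a : Str) : Equiv (ten a unit) a :=
  (Equiv.tenComm a unit).trans (Equiv.tenUnit a)

end Str

open Str (Equiv)

/-- Reflexivity of the syntactic equivalence (avoiding a name clash). -/
lemma erfl (a : Str) : Equiv a a := Str.Equiv.refl a

/-- Composition of contexts: `(C.comp D).fill x = C.fill (D.fill x)`. -/
def Ctx.comp : Ctx → Ctx → Ctx
  | .hole, D => D
  | .parL C T, D => .parL (C.comp D) T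
  | .parR T C, D => .parR T (C.comp D)
  | .tenL C T, D => .tenL (C.comp D) T
  | .tenR T C, D => .tenR T (C.comp D)
  | .seqL C T, D => .seqL (C.comp D) T
  | .seqR T C, D => .seqR T (C.comp D)
  | .quest C, D => .quest (C.comp D)
  | .bang C, D => .bang (C.comp D)

@[simp] lemma Ctx.fill_comp (C D : Ctx) (x : Str) :
    (C.comp D).fill x = C.fill (D.fill x) := by
  induction C <;> simp [Ctx.comp, Ctx.fill, *]

/-- Equivalence is a congruence for contexts. -/
lemma Ctx.fill_congr (C : Ctx) {a b : Str} (h : Equiv a b) :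
    Equiv (C.fill a) (C.fill b) := by
  induction C with
  | hole => exact h
  | parL C T ih => exact Str.Equiv.parCongr ih (erfl T)
  | parR T C ih => exact Str.Equiv.parCongr (erfl T) ih
  | tenL C T ih => exact Str.Equiv.tenCongr ih (erfl T)
  | tenR T C ih => exact Str.Equiv.tenCongr (erfl T) ih
  | seqL C T ih => exact Str.Equiv.seqCongr ih (erfl T)
  | seqR T C ih => exact Str.Equiv.seqCongr (erfl T) ih
  | quest C ih => exact Str.Equiv.questCongr ih
  | bang C ih => exact Str.Equiv.bangCongr ih

lemma DeepStep.fill {r : Rules} (C : Ctx) {a b : Str} (h : DeepStep r a b) :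
    DeepStep r (C.fill a) (C.fill b) := by
  obtain ⟨D, x, y, hr, ha, hb⟩ := h
  exact ⟨C.comp D, x, y, hr, by simp [ha], by simp [hb]⟩

lemma Step.fill {r : Rules} (C : Ctx) {a b : Str} (h : Step r a b) :
    Step r (C.fill a) (C.fill b) := by
  obtain ⟨a', b', ha, hd, hb⟩ := h
  exact ⟨C.fill a', C.fill b', C.fill_congr ha, hd.fill C, C.fill_congr hb⟩

/-- Build a step from a rule instance placed in a context, modulo equivalence. -/
lemma mkStep {r : Rules} {a b X Y : Str} (C : Ctx) (hr : r a b)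
    (h1 : Equiv X (C.fill a)) (h2 : Equiv (C.fill b) Y) : Step r X Y :=
  ⟨C.fill a, C.fill b, h1, ⟨C, a, b, hr, rfl, rfl⟩, h2⟩

lemma mkStep' {r : Rules} {a b : Str} (hr : r a b) : Step r a b :=
  mkStep .hole hr (erfl a) (erfl b)

lemma Step.equivL {r : Rules} {x y z : Str} (h : Equiv x y) (hs : Step r y z) :
    Step r x z := by
  obtain ⟨a', b', ha, hd, hb⟩ := hs
  exact ⟨a', b', h.trans ha, hd, hb⟩

lemma Step.equivR {r : Rules} {x y z : Str} (hs : Step r x y) (h : Equiv y z) :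
    Step r x z := by
  obtain ⟨a', b', ha, hd, hb⟩ := hs
  exact ⟨a', b', ha, hd, hb.trans h⟩

lemma Step.mono {r s : Rules} (h : r ≤ s) {x y : Str} (hs : Step r x y) :
    Step s x y := by
  obtain ⟨a', b', ha, ⟨C, a, b, hr, rfl, rfl⟩, hb⟩ := hs
  exact ⟨_, _, ha, ⟨C, a, b, h a b hr, rfl, rfl⟩, hb⟩

namespace Deriv

lemma ofEquiv {r : Rules} {x y : Str} (h : Equiv x y) : Deriv r x y := Or.inl h

lemma rfl {r : Rules} (x : Str) : Deriv r x x := Or.inl (erfl x)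

lemma single {r : Rules} {x y : Str} (h : Step r x y) : Deriv r x y :=
  Or.inr (Relation.TransGen.single h)

lemma equivL {r : Rules} {x y z : Str} (h : Equiv x y) (hd : Deriv r y z) :
    Deriv r x z := by
  rcases hd with h' | h'
  · exact Or.inl (h.trans h')
  · obtain ⟨b, hab, hbc⟩ := (Relation.TransGen.head'_iff).mp h'
    exact Or.inr (Relation.TransGen.head' (hab.equivL h) hbc)

lemma equivR {r : Rules} {x y z : Str} (hd : Deriv r x y) (h : Equiv y z) :
    Deriv r x z := by
  rcases hd with h' | h'
  · exact Or.inl (h'.trans h)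
  · refine Or.inr ?_
    induction h' with
    | single hs => exact Relation.TransGen.single (hs.equivR h)
    | tail hp hs _ => exact hp.tail (hs.equivR h)

lemma trans {r : Rules} {x y z : Str} (h1 : Deriv r x y) (h2 : Deriv r y z) :
    Deriv r x z := by
  rcases h1 with h1 | h1
  · exact equivL h1 h2
  · rcases h2 with h2 | h2
    · exact equivR (Or.inr h1) h2
    · exact Or.inr (h1.trans h2)

lemma fill {r : Rules} (C : Ctx) {a b : Str} (h : Deriv r a b) :
    Deriv r (C.fill a) (C.fill b) := by
  rcases h with h | h
  · exact Or.inl (C.fill_congr h)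
  · refine Or.inr ?_
    induction h with
    | single hs => exact Relation.TransGen.single (hs.fill C)
    | tail _ hs ih => exact ih.tail (hs.fill C)

lemma mono {r s : Rules} (hrs : r ≤ s) {x y : Str} (h : Deriv r x y) :
    Deriv s x y := by
  rcases h with h | h
  · exact Or.inl h
  · refine Or.inr ?_
    induction h with
    | single hs => exact Relation.TransGen.single (hs.mono hrs)
    | tail _ hs ih => exact ih.tail (hs.mono hrs)

end Deriv

/-! ### The middle system -/

/-- The middle system SNEL without e↓ and e↑. -/
def msys : Rules :=
  aiDown ⊔ aiUp ⊔ sw ⊔ qDown ⊔ qUp ⊔ pDown ⊔ pUp ⊔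
    wDown ⊔ wUp ⊔ bDown ⊔ bUp ⊔ gDown ⊔ gUp

section msysMem
variable {a b : Str}

lemma msys_aiDown (h : aiDown a b) : msys a b :=
  Or.inl <| Or.inl <| Or.inl <| Or.inl <| Or.inl <| Or.inl <| Or.inl <| Or.inl <|
    Or.inl <| Or.inl <| Or.inl <| Or.inl h
lemma msys_aiUp (h : aiUp a b) : msys a b :=
  Or.inl <| Or.inl <| Or.inl <| Or.inl <| Or.inl <| Or.inl <| Or.inl <| Or.inl <|
    Or.inl <| Or.inl <| Or.inl <| Or.inr h
lemma msys_sw (h : sw a b) : msys a b :=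
  Or.inl <| Or.inl <| Or.inl <| Or.inl <| Or.inl <| Or.inl <| Or.inl <| Or.inl <|
    Or.inl <| Or.inl <| Or.inr h
lemma msys_qDown (h : qDown a b) : msys a b :=
  Or.inl <| Or.inl <| Or.inl <| Or.inl <| Or.inl <| Or.inl <| Or.inl <| Or.inl <|
    Or.inl <| Or.inr h
lemma msys_qUp (h : qUp a b) : msys a b :=
  Or.inl <| Or.inl <| Or.inl <| Or.inl <| Or.inl <| Or.inl <| Or.inl <| Or.inl <|
    Or.inr h
lemma msys_pDown (h : pDown a b) : msys a b :=
  Or.inl <| Or.inl <| Or.inl <| Or.inl <| Or.inl <| Or.inl <| Or.inl <| Or.inr h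
lemma msys_pUp (h : pUp a b) : msys a b :=
  Or.inl <| Or.inl <| Or.inl <| Or.inl <| Or.inl <| Or.inl <| Or.inr h
lemma msys_wDown (h : wDown a b) : msys a b :=
  Or.inl <| Or.inl <| Or.inl <| Or.inl <| Or.inl <| Or.inr h
lemma msys_wUp (h : wUp a b) : msys a b :=
  Or.inl <| Or.inl <| Or.inl <| Or.inl <| Or.inr h
lemma msys_bDown (h : bDown a b) : msys a b :=
  Or.inl <| Or.inl <| Or.inl <| Or.inr h
lemma msys_bUp (h : bUp a b) : msys a b :=
  Or.inl <| Or.inl <| Or.inr h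
lemma msys_gDown (h : gDown a b) : msys a b :=
  Or.inl <| Or.inr h
lemma msys_gUp (h : gUp a b) : msys a b := Or.inr h

lemma msys_cases (h : msys a b) :
    aiDown a b ∨ aiUp a b ∨ sw a b ∨ qDown a b ∨ qUp a b ∨ pDown a b ∨ pUp a b ∨
    wDown a b ∨ wUp a b ∨ bDown a b ∨ bUp a b ∨ gDown a b ∨ gUp a b := by
  rcases h with ((((((((((((h|h)|h)|h)|h)|h)|h)|h)|h)|h)|h)|h)|h) <;> tauto

lemma snel_cases (h : snel a b) :
    msys a b ∨ eDown a b ∨ eUp a b := by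
  rcases h with ((((((((((((((h|h)|h)|h)|h)|h)|h)|h)|h)|h)|h)|h)|h)|h)|h)
  · exact Or.inl (msys_aiDown h)
  · exact Or.inl (msys_aiUp h)
  · exact Or.inl (msys_sw h)
  · exact Or.inl (msys_qDown h)
  · exact Or.inl (msys_qUp h)
  · exact Or.inl (msys_pDown h)
  · exact Or.inl (msys_pUp h)
  · exact Or.inr (Or.inl h)
  · exact Or.inr (Or.inr h)
  · exact Or.inl (msys_wDown h)
  · exact Or.inl (msys_wUp h)
  · exact Or.inl (msys_bDown h)
  · exact Or.inl (msys_bUp h)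
  · exact Or.inl (msys_gDown h)
  · exact Or.inl (msys_gUp h)

end msysMem

/-! ### Equivalence toolkit -/

section EquivKit
variable {a a' b b' : Str}

lemma pcl (h : Equiv a a') (b : Str) : Equiv (.par a b) (.par a' b) :=
  Str.Equiv.parCongr h (erfl b)
lemma pcr (a : Str) (h : Equiv b b') : Equiv (.par a b) (.par a b') :=
  Str.Equiv.parCongr (erfl a) h
lemma tcl (h : Equiv a a') (b : Str) : Equiv (.ten a b) (.ten a' b) :=
  Str.Equiv.tenCongr h (erfl b)
lemma tcr (a : Str) (h : Equiv b b') : Equiv (.ten a b) (.ten a b') :=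
  Str.Equiv.tenCongr (erfl a) h
lemma scl (h : Equiv a a') (b : Str) : Equiv (.seq a b) (.seq a' b) :=
  Str.Equiv.seqCongr h (erfl b)
lemma scr (a : Str) (h : Equiv b b') : Equiv (.seq a b) (.seq a b') :=
  Str.Equiv.seqCongr (erfl a) h

/-- `(a ⅋ b) ⅋ c ≡ (a ⅋ c) ⅋ b`. -/
lemma pswap23 (a b c : Str) :
    Equiv (.par (.par a b) c) (.par (.par a c) b) :=
  (Str.Equiv.parAssoc a b c).trans <|
    ((pcr a (Str.Equiv.parComm b c)).trans (Str.Equiv.parAssoc a c b).symm)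

/-- `(a ⊗ b) ⊗ c ≡ (a ⊗ c) ⊗ b`. -/
lemma tswap23 (a b c : Str) :
    Equiv (.ten (.ten a b) c) (.ten (.ten a c) b) :=
  (Str.Equiv.tenAssoc a b c).trans <|
    ((tcr a (Str.Equiv.tenComm b c)).trans (Str.Equiv.tenAssoc a c b).symm)

end EquivKit

/-! ### Abbreviations and derived inference moves -/

/-- `?∘` -/
abbrev qu : Str := .quest .unit
/-- `!∘` -/
abbrev bu : Str := .bang .unit

section Moves
variable (A B X Y : Str)

/-- Mix: `A ⊗ B → A ⅋ B` (switch with units). -/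
lemma tenToPar : Deriv msys (.ten A B) (.par A B) :=
  Deriv.single <| mkStep .hole (msys_sw (sw.mk .unit A B))
    (tcl (Str.Equiv.parUnit A).symm B)
    ((pcl (Str.Equiv.tenUnit B) A).trans (Str.Equiv.parComm B A))

/-- `A ⅋ B → A ◁ B` (seq with units). -/
lemma parToSeq : Deriv msys (.par A B) (.seq A B) :=
  Deriv.single <| mkStep .hole (msys_qDown (qDown.mk A .unit .unit B))
    (Str.Equiv.parCongr (Str.Equiv.seqUnitR A).symm (Str.Equiv.seqUnitL B).symm)
    (Str.Equiv.seqCongr (Str.Equiv.parUnitR A) (Str.Equiv.parUnit B))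

/-- `A ◁ B → A ⊗ B` (coseq with units). -/
lemma seqToTen : Deriv msys (.seq A B) (.ten A B) :=
  Deriv.single <| mkStep .hole (msys_qUp (qUp.mk A .unit .unit B))
    (Str.Equiv.seqCongr (Str.Equiv.tenUnitR A).symm (Str.Equiv.tenUnit B).symm)
    (Str.Equiv.tenCongr (Str.Equiv.seqUnitR A) (Str.Equiv.seqUnitL B))

lemma parToTen : Deriv msys (.par A B) (.ten A B) :=
  (parToSeq A B).trans (seqToTen A B)

lemma seqToPar : Deriv msys (.seq A B) (.par A B) :=
  (seqToTen A B).trans (tenToPar A B)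

lemma tenToSeq : Deriv msys (.ten A B) (.seq A B) :=
  (tenToPar A B).trans (parToSeq A B)

/-- Dereliction `!X → X` (by b↑ then w↑). -/
lemma derelict : Deriv msys (.bang X) X :=
  (Deriv.single (mkStep' (msys_bUp (bUp.mk X)))).trans
    (Deriv.single <| mkStep (Ctx.tenL .hole X) (msys_wUp (wUp.mk X))
      (erfl _) (Str.Equiv.tenUnit X))

/-- `X → ?X` (by w↓ then b↓). -/
lemma questIntro : Deriv msys X (.quest X) :=
  (Deriv.single (mkStep (Ctx.parL .hole X) (msys_wDown (wDown.mk X))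
      (Str.Equiv.parUnit X).symm (erfl _))).trans
    (Deriv.single (mkStep' (msys_bDown (bDown.mk X))))

/-- Spawning a `!∘` next to a bang: `!X → (!X ⅋ !∘) ⅋ ?∘`. -/
lemma spawn : Deriv msys (.bang X) (.par (.par (.bang X) bu) qu) := by
  refine (Deriv.single (mkStep' (msys_gUp (gUp.mk X)))).trans ?_
  refine (Deriv.single (mkStep' (msys_bUp (bUp.mk (.bang X))))).trans ?_
  -- !!X ⊗ !X  →p↓ deep  (!∘ ⅋ ?!X) ⊗ !X
  refine (Deriv.single (mkStep (Ctx.tenL .hole (.bang X))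
      (msys_pDown (pDown.mk .unit (.bang X)))
      (tcl (Str.Equiv.bangCongr (Str.Equiv.parUnit (.bang X)).symm) _)
      (erfl _))).trans ?_
  -- w↑ deep inside the quest
  refine (Deriv.single (mkStep (Ctx.tenL (Ctx.parR bu (Ctx.quest .hole)) (.bang X))
      (msys_wUp (wUp.mk X)) (erfl _) (erfl _))).trans ?_
  -- (!∘ ⅋ ?∘) ⊗ !X → (!∘ ⅋ ?∘) ⅋ !X ≡ (!X ⅋ !∘) ⅋ ?∘
  refine (tenToPar (.par bu qu) (.bang X)).equivR ?_
  exact (Str.Equiv.parComm (.par bu qu) (.bang X)).trans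
    (Str.Equiv.parAssoc (.bang X) bu qu).symm

/-- Absorption of a `?∘ ⊗ !∘` pair into an adjacent quest:
`(?∘ ⊗ !∘) ⅋ ?Y → ?Y`. -/
lemma absorb : Deriv msys (.par (.ten qu bu) (.quest Y)) (.quest Y) := by
  -- w↓ deep inside the !∘ : content ∘ → ?Y
  refine (Deriv.single (mkStep (Ctx.parL (Ctx.tenR qu (Ctx.bang .hole)) (.quest Y))
      (msys_wDown (wDown.mk Y)) (erfl _) (erfl _))).trans ?_
  -- p↑ : ?∘ ⊗ !?Y → ?(∘ ⊗ ?Y)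
  refine (Deriv.single (mkStep (Ctx.parL .hole (.quest Y))
      (msys_pUp (pUp.mk .unit (.quest Y))) (erfl _)
      (pcl (Str.Equiv.questCongr (Str.Equiv.tenUnit (.quest Y))) _))).trans ?_
  -- b↓ : ??Y ⅋ ?Y → ??Y
  refine (Deriv.single (mkStep' (msys_bDown (bDown.mk (.quest Y))))).trans ?_
  -- g↓ : ??Y → ?Y
  exact Deriv.single (mkStep' (msys_gDown (gDown.mk Y)))

end Moves

/-! ### Top attachments and the positioned carry -/

/-- The context `[·] ⅋ !∘ ⅋ ⋯ ⅋ !∘`. -/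
def topCtx : ℕ → Ctx
  | 0 => .hole
  | k+1 => .parL (topCtx k) bu

/-- `x ⅋ !∘ ⅋ ⋯ ⅋ !∘`. -/
def topAttach (k : ℕ) (x : Str) : Str := (topCtx k).fill x

@[simp] lemma topAttach_zero (x : Str) : topAttach 0 x = x := rfl
@[simp] lemma topAttach_succ (k : ℕ) (x : Str) :
    topAttach (k+1) x = .par (topAttach k x) bu := rfl

/-- The attachments are reachable by e↓ only. -/
lemma eDown_topAttach (k : ℕ) (x : Str) : Deriv eDown x (topAttach k x) := by
  induction k with
  | zero => exact Deriv.rfl x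
  | succ k ih =>
    refine ih.trans (Deriv.single (mkStep (Ctx.parR (topAttach k x) .hole)
      eDown.mk (Str.Equiv.parUnitR (topAttach k x)).symm (erfl _)))

lemma deriv_topAttach {r : Rules} (k : ℕ) {a b : Str} (h : Deriv r a b) :
    Deriv r (topAttach k a) (topAttach k b) := h.fill (topCtx k)

lemma topAttach_par (k : ℕ) (x : Str) :
    Equiv (topAttach k (.par x bu)) (.par (topAttach k x) bu) := by
  induction k with
  | zero => exact erfl _
  | succ k ih =>
    exact (pcl ih bu).trans (pswap23 (topAttach k x) bu bu)

/-- The junked version of a context: a `?∘` is left next to the content of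
every bang on the path to the hole. -/
def jCtx : Ctx → Ctx
  | .hole => .hole
  | .parL C T => .parL (jCtx C) T
  | .parR T C => .parR T (jCtx C)
  | .tenL C T => .tenL (jCtx C) T
  | .tenR T C => .tenR T (jCtx C)
  | .seqL C T => .seqL (jCtx C) T
  | .seqR T C => .seqR T (jCtx C)
  | .quest C => .quest (jCtx C)
  | .bang C => .bang (.parL (jCtx C) qu)

/-- **Positioned carry**: a `!∘` attached at the top can be carried to any
position, leaving `?∘`s at the bangs crossed on the way. -/
lemma carry : ∀ (C : Ctx) (X : Str),
    Deriv msys (.par (C.fill X) bu) ((jCtx C).fill (.par X bu)) := by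
  intro C
  induction C with
  | hole => exact fun X => Deriv.rfl _
  | parL C T ih =>
    intro X
    exact Deriv.equivL (pswap23 (C.fill X) T bu)
      ((ih X).fill (Ctx.parL .hole T))
  | parR T C ih =>
    intro X
    -- (T ⅋ A) ⅋ bu ≡ T ⅋ (A ⅋ bu)
    exact Deriv.equivL (Str.Equiv.parAssoc T (C.fill X) bu)
      ((ih X).fill (Ctx.parR T .hole))
  | tenL C T ih =>
    intro X
    refine (parToTen (.ten (C.fill X) T) bu).trans ?_
    refine Deriv.equivL (tswap23 (C.fill X) T bu) ?_
    refine ((tenToPar (C.fill X) bu).fill (Ctx.tenL .hole T)).trans ?_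
    exact (ih X).fill (Ctx.tenL .hole T)
  | tenR T C ih =>
    intro X
    refine (parToTen (.ten T (C.fill X)) bu).trans ?_
    refine Deriv.equivL (Str.Equiv.tenAssoc T (C.fill X) bu) ?_
    refine ((tenToPar (C.fill X) bu).fill (Ctx.tenR T .hole)).trans ?_
    exact (ih X).fill (Ctx.tenR T .hole)
  | seqL C T ih =>
    intro X
    refine (Deriv.single (mkStep .hole (msys_qDown (qDown.mk (C.fill X) T bu .unit))
      (pcr _ (Str.Equiv.seqUnitR bu).symm)
      (scr _ (Str.Equiv.parUnitR T)))).trans ?_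
    exact (ih X).fill (Ctx.seqL .hole T)
  | seqR T C ih =>
    intro X
    refine (Deriv.single (mkStep .hole (msys_qDown (qDown.mk T (C.fill X) .unit bu))
      (pcr _ (Str.Equiv.seqUnitL bu).symm)
      (scl (Str.Equiv.parUnitR T) _))).trans ?_
    exact (ih X).fill (Ctx.seqR T .hole)
  | quest C ih =>
    intro X
    refine (parToTen (.quest (C.fill X)) bu).trans ?_
    -- g↑ on the carrier, then p↑
    refine (Deriv.single (mkStep (Ctx.tenR (.quest (C.fill X)) .hole)
      (msys_gUp (gUp.mk .unit)) (erfl _) (erfl _))).trans ?_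
    refine (Deriv.single (mkStep' (msys_pUp (pUp.mk (C.fill X) bu)))).trans ?_
    refine ((tenToPar (C.fill X) bu).fill (Ctx.quest .hole)).trans ?_
    exact (ih X).fill (Ctx.quest .hole)
  | bang C ih =>
    intro X
    -- drop the carrier, then respawn inside
    refine (Deriv.single (mkStep (Ctx.parR (.bang (C.fill X)) .hole)
      (msys_wUp (wUp.mk .unit))
      (erfl _) (Str.Equiv.parUnitR (.bang (C.fill X))))).trans ?_
    refine (Deriv.single (mkStep' (msys_gUp (gUp.mk (C.fill X))))).trans ?_
    refine ((spawn (C.fill X)).fill (Ctx.bang .hole)).trans ?_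
    refine ((derelict (C.fill X)).fill
      (Ctx.bang (Ctx.parL (Ctx.parL .hole bu) qu))).trans ?_
    exact (ih X).fill (Ctx.bang (Ctx.parL .hole qu))

/-! ### Junk and multi-insertions -/

/-- Structures erasable by e↑ alone. -/
inductive Junk : Str → Prop
  | unit : Junk .unit
  | par {a b} : Junk a → Junk b → Junk (.par a b)
  | ten {a b} : Junk a → Junk b → Junk (.ten a b)
  | seq {a b} : Junk a → Junk b → Junk (.seq a b)
  | quest {a} : Junk a → Junk (.quest a)

lemma junk_eUp {j : Str} (h : Junk j) : Deriv eUp j .unit := by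
  induction h with
  | unit => exact Deriv.rfl _
  | par h1 h2 ih1 ih2 =>
    exact ((ih1.fill (Ctx.parL .hole _)).trans
      (ih2.fill (Ctx.parR .unit .hole))).equivR (Str.Equiv.parUnit .unit)
  | ten h1 h2 ih1 ih2 =>
    exact ((ih1.fill (Ctx.tenL .hole _)).trans
      (ih2.fill (Ctx.tenR .unit .hole))).equivR (Str.Equiv.tenUnit .unit)
  | seq h1 h2 ih1 ih2 =>
    exact ((ih1.fill (Ctx.seqL .hole _)).trans
      (ih2.fill (Ctx.seqR .unit .hole))).equivR (Str.Equiv.seqUnitL .unit)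
  | quest h ih =>
    exact (ih.fill (Ctx.quest .hole)).trans (Deriv.single (mkStep' eUp.mk))

lemma junk_wIns {j : Str} (h : Junk j) : Deriv wDown .unit j := by
  induction h with
  | unit => exact Deriv.rfl _
  | par h1 h2 ih1 ih2 =>
    refine Deriv.equivL (Str.Equiv.parUnit .unit).symm ?_
    exact (ih1.fill (Ctx.parL .hole .unit)).trans (ih2.fill (Ctx.parR _ .hole))
  | ten h1 h2 ih1 ih2 =>
    refine Deriv.equivL (Str.Equiv.tenUnit .unit).symm ?_
    exact (ih1.fill (Ctx.tenL .hole .unit)).trans (ih2.fill (Ctx.tenR _ .hole))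
  | seq h1 h2 ih1 ih2 =>
    refine Deriv.equivL (Str.Equiv.seqUnitL .unit).symm ?_
    exact (ih1.fill (Ctx.seqL .hole .unit)).trans (ih2.fill (Ctx.seqR _ .hole))
  | quest h _ => exact Deriv.single (mkStep' (wDown.mk _))

/-- Multi-insertion of junk: `MJun x v` means `v` is `x` with junk structures
attached (by ⅋) at some positions. -/
inductive MJun : Str → Str → Prop
  | refl (x) : MJun x x
  | attach {x v j} : MJun x v → Junk j → MJun x (.par v j)
  | par {a a' b b'} : MJun a a' → MJun b b' → MJun (.par a b) (.par a' b')
  | ten {a a' b b'} : MJun a a' → MJun b b' → MJun (.ten a b) (.ten a' b')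
  | seq {a a' b b'} : MJun a a' → MJun b b' → MJun (.seq a b) (.seq a' b')
  | quest {a a'} : MJun a a' → MJun (.quest a) (.quest a')
  | bang {a a'} : MJun a a' → MJun (.bang a) (.bang a')

lemma MJun.fill (C : Ctx) {a b : Str} (h : MJun a b) :
    MJun (C.fill a) (C.fill b) := by
  induction C with
  | hole => exact h
  | parL C T ih => exact .par ih (.refl T)
  | parR T C ih => exact .par (.refl T) ih
  | tenL C T ih => exact .ten ih (.refl T)
  | tenR T C ih => exact .ten (.refl T) ih
  | seqL C T ih => exact .seq ih (.refl T)
  | seqR T C ih => exact .seq (.refl T) ih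
  | quest C ih => exact .quest ih
  | bang C ih => exact .bang ih

lemma junk_mjun {j j' : Str} (hj : Junk j) (h : MJun j j') : Junk j' := by
  induction h with
  | refl => exact hj
  | attach h hj' ih => exact .par (ih hj) hj'
  | par h1 h2 ih1 ih2 => cases hj with | par hj1 hj2 => exact .par (ih1 hj1) (ih2 hj2)
  | ten h1 h2 ih1 ih2 => cases hj with | ten hj1 hj2 => exact .ten (ih1 hj1) (ih2 hj2)
  | seq h1 h2 ih1 ih2 => cases hj with | seq hj1 hj2 => exact .seq (ih1 hj1) (ih2 hj2)
  | quest h ih => cases hj with | quest hj => exact .quest (ih hj)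
  | bang h ih => cases hj

lemma MJun.trans {x y z : Str} (h1 : MJun x y) (h2 : MJun y z) : MJun x z := by
  induction h2 generalizing x with
  | refl => exact h1
  | attach h hj ih => exact .attach (ih h1) hj
  | par h2a h2b iha ihb =>
    cases h1 with
    | refl => exact .par (iha (.refl _)) (ihb (.refl _))
    | attach h1' hj => exact .attach (iha h1') (junk_mjun hj h2b)
    | par h1a h1b => exact .par (iha h1a) (ihb h1b)
  | ten h2a h2b iha ihb =>
    cases h1 with
    | refl => exact .ten (iha (.refl _)) (ihb (.refl _))
    | ten h1a h1b => exact .ten (iha h1a) (ihb h1b)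
  | seq h2a h2b iha ihb =>
    cases h1 with
    | refl => exact .seq (iha (.refl _)) (ihb (.refl _))
    | seq h1a h1b => exact .seq (iha h1a) (ihb h1b)
  | quest h ih =>
    cases h1 with
    | refl => exact .quest (ih (.refl _))
    | quest h1' => exact .quest (ih h1')
  | bang h ih =>
    cases h1 with
    | refl => exact .bang (ih (.refl _))
    | bang h1' => exact .bang (ih h1')

lemma mjun_eUp {x v : Str} (h : MJun x v) : Deriv eUp v x := by
  induction h with
  | refl => exact Deriv.rfl _
  | attach h hj ih =>
    exact (((junk_eUp hj).fill (Ctx.parR _ .hole)).trans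
      (Deriv.ofEquiv (Str.Equiv.parUnitR _))).trans ih
  | par h1 h2 ih1 ih2 =>
    exact (ih1.fill (Ctx.parL .hole _)).trans (ih2.fill (Ctx.parR _ .hole))
  | ten h1 h2 ih1 ih2 =>
    exact (ih1.fill (Ctx.tenL .hole _)).trans (ih2.fill (Ctx.tenR _ .hole))
  | seq h1 h2 ih1 ih2 =>
    exact (ih1.fill (Ctx.seqL .hole _)).trans (ih2.fill (Ctx.seqR _ .hole))
  | quest h ih => exact ih.fill (Ctx.quest .hole)
  | bang h ih => exact ih.fill (Ctx.bang .hole)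

lemma mjun_wIns {x v : Str} (h : MJun x v) : Deriv wDown x v := by
  induction h with
  | refl => exact Deriv.rfl _
  | attach h hj ih =>
    exact ih.trans ((Deriv.ofEquiv (Str.Equiv.parUnitR _).symm).trans
      ((junk_wIns hj).fill (Ctx.parR _ .hole)))
  | par h1 h2 ih1 ih2 =>
    exact (ih1.fill (Ctx.parL .hole _)).trans (ih2.fill (Ctx.parR _ .hole))
  | ten h1 h2 ih1 ih2 =>
    exact (ih1.fill (Ctx.tenL .hole _)).trans (ih2.fill (Ctx.tenR _ .hole))
  | seq h1 h2 ih1 ih2 =>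
    exact (ih1.fill (Ctx.seqL .hole _)).trans (ih2.fill (Ctx.seqR _ .hole))
  | quest h ih => exact ih.fill (Ctx.quest .hole)
  | bang h ih => exact ih.fill (Ctx.bang .hole)

/-! #### Inversion lemmas for `MJun` -/

lemma mjun_inv_unit {v : Str} (h : MJun .unit v) : Junk v := by
  generalize hx : Str.unit = x at h
  induction h with
  | refl => exact hx ▸ Junk.unit
  | attach h hj ih => exact .par (ih hx) hj
  | par _ _ _ _ => cases hx
  | ten _ _ _ _ => cases hx
  | seq _ _ _ _ => cases hx
  | quest _ _ => cases hx
  | bang _ _ => cases hx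

lemma mjun_inv_par {a b v : Str} (h : MJun (.par a b) v) :
    ∃ a' b' j, MJun a a' ∧ MJun b b' ∧ Junk j ∧
      Equiv v (.par (.par a' b') j) := by
  generalize hx : Str.par a b = x at h
  induction h generalizing a b with
  | refl =>
    exact ⟨a, b, .unit, .refl a, .refl b, .unit, hx ▸ (Str.Equiv.parUnitR _).symm⟩
  | attach h hj ih =>
    obtain ⟨a', b', j, h1, h2, hj', he⟩ := ih hx
    exact ⟨a', b', .par j _, h1, h2, .par hj' hj,
      (pcl he _).trans (Str.Equiv.parAssoc _ j _)⟩
  | par h1 h2 _ _ =>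
    cases hx
    exact ⟨_, _, .unit, h1, h2, .unit, (Str.Equiv.parUnitR _).symm⟩
  | ten _ _ _ _ => cases hx
  | seq _ _ _ _ => cases hx
  | quest _ _ => cases hx
  | bang _ _ => cases hx

lemma mjun_inv_ten {a b v : Str} (h : MJun (.ten a b) v) :
    ∃ a' b' j, MJun a a' ∧ MJun b b' ∧ Junk j ∧
      Equiv v (.par (.ten a' b') j) := by
  generalize hx : Str.ten a b = x at h
  induction h generalizing a b with
  | refl =>
    exact ⟨a, b, .unit, .refl a, .refl b, .unit, hx ▸ (Str.Equiv.parUnitR _).symm⟩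
  | attach h hj ih =>
    obtain ⟨a', b', j, h1, h2, hj', he⟩ := ih hx
    exact ⟨a', b', .par j _, h1, h2, .par hj' hj,
      (pcl he _).trans (Str.Equiv.parAssoc _ j _)⟩
  | ten h1 h2 _ _ =>
    cases hx
    exact ⟨_, _, .unit, h1, h2, .unit, (Str.Equiv.parUnitR _).symm⟩
  | par _ _ _ _ => cases hx
  | seq _ _ _ _ => cases hx
  | quest _ _ => cases hx
  | bang _ _ => cases hx

lemma mjun_inv_seq {a b v : Str} (h : MJun (.seq a b) v) :
    ∃ a' b' j, MJun a a' ∧ MJun b b' ∧ Junk j ∧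
      Equiv v (.par (.seq a' b') j) := by
  generalize hx : Str.seq a b = x at h
  induction h generalizing a b with
  | refl =>
    exact ⟨a, b, .unit, .refl a, .refl b, .unit, hx ▸ (Str.Equiv.parUnitR _).symm⟩
  | attach h hj ih =>
    obtain ⟨a', b', j, h1, h2, hj', he⟩ := ih hx
    exact ⟨a', b', .par j _, h1, h2, .par hj' hj,
      (pcl he _).trans (Str.Equiv.parAssoc _ j _)⟩
  | seq h1 h2 _ _ =>
    cases hx
    exact ⟨_, _, .unit, h1, h2, .unit, (Str.Equiv.parUnitR _).symm⟩
  | par _ _ _ _ => cases hx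
  | ten _ _ _ _ => cases hx
  | quest _ _ => cases hx
  | bang _ _ => cases hx

lemma mjun_inv_quest {a v : Str} (h : MJun (.quest a) v) :
    ∃ a' j, MJun a a' ∧ Junk j ∧ Equiv v (.par (.quest a') j) := by
  generalize hx : Str.quest a = x at h
  induction h generalizing a with
  | refl => exact ⟨a, .unit, .refl a, .unit, hx ▸ (Str.Equiv.parUnitR _).symm⟩
  | attach h hj ih =>
    obtain ⟨a', j, h1, hj', he⟩ := ih hx
    exact ⟨a', .par j _, h1, .par hj' hj,
      (pcl he _).trans (Str.Equiv.parAssoc _ j _)⟩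
  | quest h1 _ =>
    cases hx
    exact ⟨_, .unit, h1, .unit, (Str.Equiv.parUnitR _).symm⟩
  | par _ _ _ _ => cases hx
  | ten _ _ _ _ => cases hx
  | seq _ _ _ _ => cases hx
  | bang _ _ => cases hx

lemma mjun_inv_bang {a v : Str} (h : MJun (.bang a) v) :
    ∃ a' j, MJun a a' ∧ Junk j ∧ Equiv v (.par (.bang a') j) := by
  generalize hx : Str.bang a = x at h
  induction h generalizing a with
  | refl => exact ⟨a, .unit, .refl a, .unit, hx ▸ (Str.Equiv.parUnitR _).symm⟩
  | attach h hj ih =>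
    obtain ⟨a', j, h1, hj', he⟩ := ih hx
    exact ⟨a', .par j _, h1, .par hj' hj,
      (pcl he _).trans (Str.Equiv.parAssoc _ j _)⟩
  | bang h1 _ =>
    cases hx
    exact ⟨_, .unit, h1, .unit, (Str.Equiv.parUnitR _).symm⟩
  | par _ _ _ _ => cases hx
  | ten _ _ _ _ => cases hx
  | seq _ _ _ _ => cases hx
  | quest _ _ => cases hx

lemma mjun_inv_atom {n : ℕ} {bo : Bool} {v : Str} (h : MJun (.atom n bo) v) :
    ∃ j, Junk j ∧ Equiv v (.par (.atom n bo) j) := by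
  generalize hx : Str.atom n bo = x at h
  induction h with
  | refl => exact ⟨.unit, .unit, hx ▸ (Str.Equiv.parUnitR _).symm⟩
  | attach h hj ih =>
    obtain ⟨j, hj', he⟩ := ih hx
    exact ⟨.par j _, .par hj' hj, (pcl he _).trans (Str.Equiv.parAssoc _ j _)⟩
  | par _ _ _ _ => cases hx
  | ten _ _ _ _ => cases hx
  | seq _ _ _ _ => cases hx
  | quest _ _ => cases hx
  | bang _ _ => cases hx

/-- Directedness of multi-insertions: two junked versions have a common
junked version reachable from both by w↓. -/
lemma mjun_join {x u v : Str} (h1 : MJun x u) (h2 : MJun x v) :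
    ∃ w, MJun x w ∧ Deriv wDown u w ∧ Deriv wDown v w := by
  induction h1 generalizing v with
  | refl => exact ⟨v, h2, mjun_wIns h2, Deriv.rfl v⟩
  | attach h hj ih =>
    obtain ⟨w₀, hw, hu, hv⟩ := ih h2
    refine ⟨.par w₀ _, .attach hw hj, hu.fill (Ctx.parL .hole _), ?_⟩
    exact hv.trans ((Deriv.ofEquiv (Str.Equiv.parUnitR _).symm).trans
      ((junk_wIns hj).fill (Ctx.parR _ .hole)))
  | par ha hb iha ihb =>
    obtain ⟨a'', b'', j, h2a, h2b, hj, he⟩ := mjun_inv_par h2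
    obtain ⟨w1, hw1, hu1, hv1⟩ := iha h2a
    obtain ⟨w2, hw2, hu2, hv2⟩ := ihb h2b
    refine ⟨.par (.par w1 w2) j, .attach (.par hw1 hw2) hj, ?_, ?_⟩
    · refine ((hu1.fill (Ctx.parL .hole _)).trans
        (hu2.fill (Ctx.parR _ .hole))).trans ?_
      exact (Deriv.ofEquiv (Str.Equiv.parUnitR _).symm).trans
        ((junk_wIns hj).fill (Ctx.parR _ .hole))
    · refine (Deriv.ofEquiv he).trans ?_
      exact ((hv1.fill (Ctx.parL (Ctx.parL .hole _) _)).trans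
        (hv2.fill (Ctx.parL (Ctx.parR _ .hole) _)))
  | ten ha hb iha ihb =>
    obtain ⟨a'', b'', j, h2a, h2b, hj, he⟩ := mjun_inv_ten h2
    obtain ⟨w1, hw1, hu1, hv1⟩ := iha h2a
    obtain ⟨w2, hw2, hu2, hv2⟩ := ihb h2b
    refine ⟨.par (.ten w1 w2) j, .attach (.ten hw1 hw2) hj, ?_, ?_⟩
    · refine ((hu1.fill (Ctx.tenL .hole _)).trans
        (hu2.fill (Ctx.tenR _ .hole))).trans ?_
      exact (Deriv.ofEquiv (Str.Equiv.parUnitR _).symm).trans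
        ((junk_wIns hj).fill (Ctx.parR _ .hole))
    · refine (Deriv.ofEquiv he).trans ?_
      exact ((hv1.fill (Ctx.parL (Ctx.tenL .hole _) _)).trans
        (hv2.fill (Ctx.parL (Ctx.tenR _ .hole) _)))
  | seq ha hb iha ihb =>
    obtain ⟨a'', b'', j, h2a, h2b, hj, he⟩ := mjun_inv_seq h2
    obtain ⟨w1, hw1, hu1, hv1⟩ := iha h2a
    obtain ⟨w2, hw2, hu2, hv2⟩ := ihb h2b
    refine ⟨.par (.seq w1 w2) j, .attach (.seq hw1 hw2) hj, ?_, ?_⟩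
    · refine ((hu1.fill (Ctx.seqL .hole _)).trans
        (hu2.fill (Ctx.seqR _ .hole))).trans ?_
      exact (Deriv.ofEquiv (Str.Equiv.parUnitR _).symm).trans
        ((junk_wIns hj).fill (Ctx.parR _ .hole))
    · refine (Deriv.ofEquiv he).trans ?_
      exact ((hv1.fill (Ctx.parL (Ctx.seqL .hole _) _)).trans
        (hv2.fill (Ctx.parL (Ctx.seqR _ .hole) _)))
  | quest ha iha =>
    obtain ⟨a'', j, h2a, hj, he⟩ := mjun_inv_quest h2
    obtain ⟨w1, hw1, hu1, hv1⟩ := iha h2a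
    refine ⟨.par (.quest w1) j, .attach (.quest hw1) hj, ?_, ?_⟩
    · refine (hu1.fill (Ctx.quest .hole)).trans ?_
      exact (Deriv.ofEquiv (Str.Equiv.parUnitR _).symm).trans
        ((junk_wIns hj).fill (Ctx.parR _ .hole))
    · exact (Deriv.ofEquiv he).trans
        (hv1.fill (Ctx.parL (Ctx.quest .hole) _))
  | bang ha iha =>
    obtain ⟨a'', j, h2a, hj, he⟩ := mjun_inv_bang h2
    obtain ⟨w1, hw1, hu1, hv1⟩ := iha h2a
    refine ⟨.par (.bang w1) j, .attach (.bang hw1) hj, ?_, ?_⟩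
    · refine (hu1.fill (Ctx.bang .hole)).trans ?_
      exact (Deriv.ofEquiv (Str.Equiv.parUnitR _).symm).trans
        ((junk_wIns hj).fill (Ctx.parR _ .hole))
    · exact (Deriv.ofEquiv he).trans
        (hv1.fill (Ctx.parL (Ctx.bang .hole) _))

/-! ### Transport of multi-insertions along the syntactic equivalence -/

lemma mjun_equiv_aux : ∀ {X Y : Str}, Equiv X Y →
    (∀ V, MJun X V → ∃ V', Deriv msys V V' ∧ MJun Y V') ∧
    (∀ V, MJun Y V → ∃ V', Deriv msys V V' ∧ MJun X V') := by
  intro X Y h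
  induction h with
  | refl a => exact ⟨fun V h => ⟨V, Deriv.rfl V, h⟩, fun V h => ⟨V, Deriv.rfl V, h⟩⟩
  | symm h ih => exact ⟨ih.2, ih.1⟩
  | trans h1 h2 ih1 ih2 =>
    constructor
    · intro V h
      obtain ⟨V1, d1, m1⟩ := ih1.1 V h
      obtain ⟨V2, d2, m2⟩ := ih2.1 V1 m1
      exact ⟨V2, d1.trans d2, m2⟩
    · intro V h
      obtain ⟨V1, d1, m1⟩ := ih2.2 V h
      obtain ⟨V2, d2, m2⟩ := ih1.2 V1 m1
      exact ⟨V2, d1.trans d2, m2⟩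
  | parAssoc a b c =>
    constructor
    · intro V h
      obtain ⟨p', c', j, hp, hc, hj, he⟩ := mjun_inv_par h
      obtain ⟨a', b', j2, ha, hb, hj2, he2⟩ := mjun_inv_par hp
      refine ⟨.par (.par (.par a' (.par b' c')) j2) j, Deriv.ofEquiv ?_,
        .attach (.attach (.par ha (.par hb hc)) hj2) hj⟩
      refine (he.trans (pcl (pcl he2 c') j)).trans ?_
      refine (pcl (pswap23 (.par a' b') j2 c') j).trans ?_
      exact pcl (pcl (Str.Equiv.parAssoc a' b' c') j2) j
    · intro V h
      obtain ⟨a', q', j, ha, hq, hj, he⟩ := mjun_inv_par h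
      obtain ⟨b', c', j2, hb, hc, hj2, he2⟩ := mjun_inv_par hq
      refine ⟨.par (.par (.par (.par a' b') c') j2) j, Deriv.ofEquiv ?_,
        .attach (.attach (.par (.par ha hb) hc) hj2) hj⟩
      refine (he.trans (pcl (pcr a' he2) j)).trans ?_
      refine (pcl (Str.Equiv.parAssoc a' (.par b' c') j2).symm j).trans ?_
      exact pcl (pcl (Str.Equiv.parAssoc a' b' c').symm j2) j
  | tenAssoc a b c =>
    constructor
    · intro V h
      obtain ⟨p', c', j, hp, hc, hj, he⟩ := mjun_inv_ten h
      obtain ⟨a', b', j2, ha, hb, hj2, he2⟩ := mjun_inv_ten hp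
      refine ⟨.par (.par (.ten a' (.ten b' c')) j2) j, ?_,
        .attach (.attach (.ten ha (.ten hb hc)) hj2) hj⟩
      refine Deriv.equivL (he.trans (pcl (tcl he2 c') j)) ?_
      exact Deriv.single (mkStep (Ctx.parL .hole j)
        (msys_sw (sw.mk (.ten a' b') j2 c')) (erfl _)
        (pcl (pcl (Str.Equiv.tenAssoc a' b' c') j2) j))
    · intro V h
      obtain ⟨a', q', j, ha, hq, hj, he⟩ := mjun_inv_ten h
      obtain ⟨b', c', j2, hb, hc, hj2, he2⟩ := mjun_inv_ten hq
      refine ⟨.par (.par (.ten (.ten a' b') c') j2) j, ?_,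
        .attach (.attach (.ten (.ten ha hb) hc) hj2) hj⟩
      refine Deriv.equivL
        ((he.trans (pcl (tcr a' he2) j)).trans
          (pcl (Str.Equiv.tenComm a' _) j)) ?_
      refine Deriv.single (mkStep (Ctx.parL .hole j)
        (msys_sw (sw.mk (.ten b' c') j2 a')) (erfl _) ?_)
      exact pcl (pcl ((Str.Equiv.tenComm _ a').trans
        (Str.Equiv.tenAssoc a' b' c').symm) j2) j
  | seqAssoc a b c =>
    constructor
    · intro V h
      obtain ⟨p', c', j, hp, hc, hj, he⟩ := mjun_inv_seq h
      obtain ⟨a', b', j2, ha, hb, hj2, he2⟩ := mjun_inv_seq hp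
      refine ⟨.par (.seq (.par a' j2) (.seq b' c')) j, ?_,
        .attach (.seq (.attach ha hj2) (.seq hb hc)) hj⟩
      refine Deriv.equivL ((he.trans (pcl (scl he2 c') j)).trans
        (pcl (scl (pcr _ (Str.Equiv.seqUnitR j2).symm) c') j)) ?_
      refine Deriv.single (mkStep (Ctx.parL (Ctx.seqL .hole c') j)
        (msys_qDown (qDown.mk a' b' j2 .unit)) (erfl _) ?_)
      exact pcl ((scl (scr _ (Str.Equiv.parUnitR b')) c').trans
        (Str.Equiv.seqAssoc (.par a' j2) b' c')) j
    · intro V h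
      obtain ⟨a', q', j, ha, hq, hj, he⟩ := mjun_inv_seq h
      obtain ⟨b', c', j2, hb, hc, hj2, he2⟩ := mjun_inv_seq hq
      refine ⟨.par (.seq (.seq a' (.par b' j2)) c') j, ?_,
        .attach (.seq (.seq ha (.attach hb hj2)) hc) hj⟩
      refine Deriv.equivL ((he.trans (pcl (scr a' he2) j)).trans
        (pcl (scr a' (pcr _ (Str.Equiv.seqUnitR j2).symm)) j)) ?_
      refine Deriv.single (mkStep (Ctx.parL (Ctx.seqR a' .hole) j)
        (msys_qDown (qDown.mk b' c' j2 .unit)) (erfl _) ?_)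
      exact pcl ((scr a' (scr _ (Str.Equiv.parUnitR c'))).trans
        (Str.Equiv.seqAssoc a' (.par b' j2) c').symm) j
  | parComm a b =>
    constructor
    · intro V h
      obtain ⟨a', b', j, ha, hb, hj, he⟩ := mjun_inv_par h
      exact ⟨.par (.par b' a') j,
        Deriv.ofEquiv (he.trans (pcl (Str.Equiv.parComm a' b') j)),
        .attach (.par hb ha) hj⟩
    · intro V h
      obtain ⟨b', a', j, hb, ha, hj, he⟩ := mjun_inv_par h
      exact ⟨.par (.par a' b') j,
        Deriv.ofEquiv (he.trans (pcl (Str.Equiv.parComm b' a') j)),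
        .attach (.par ha hb) hj⟩
  | tenComm a b =>
    constructor
    · intro V h
      obtain ⟨a', b', j, ha, hb, hj, he⟩ := mjun_inv_ten h
      exact ⟨.par (.ten b' a') j,
        Deriv.ofEquiv (he.trans (pcl (Str.Equiv.tenComm a' b') j)),
        .attach (.ten hb ha) hj⟩
    · intro V h
      obtain ⟨b', a', j, hb, ha, hj, he⟩ := mjun_inv_ten h
      exact ⟨.par (.ten a' b') j,
        Deriv.ofEquiv (he.trans (pcl (Str.Equiv.tenComm b' a') j)),
        .attach (.ten ha hb) hj⟩
  | parUnit a =>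
    constructor
    · intro V h
      obtain ⟨u', a', j, hu, ha, hj, he⟩ := mjun_inv_par h
      exact ⟨.par (.par a' u') j,
        Deriv.ofEquiv (he.trans (pcl (Str.Equiv.parComm u' a') j)),
        .attach (.attach ha (mjun_inv_unit hu)) hj⟩
    · intro V h
      exact ⟨.par .unit V, Deriv.ofEquiv (Str.Equiv.parUnit V).symm,
        .par (.refl .unit) h⟩
  | tenUnit a =>
    constructor
    · intro V h
      obtain ⟨u', a', j, hu, ha, hj, he⟩ := mjun_inv_ten h
      refine ⟨.par (.par a' u') j, ?_,
        .attach (.attach ha (mjun_inv_unit hu)) hj⟩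
      refine Deriv.equivL he ?_
      refine ((tenToPar u' a').fill (Ctx.parL .hole j)).equivR ?_
      exact pcl (Str.Equiv.parComm u' a') j
    · intro V h
      exact ⟨.ten .unit V, Deriv.ofEquiv (Str.Equiv.tenUnit V).symm,
        .ten (.refl .unit) h⟩
  | seqUnitL a =>
    constructor
    · intro V h
      obtain ⟨u', a', j, hu, ha, hj, he⟩ := mjun_inv_seq h
      refine ⟨.par (.par a' u') j, ?_,
        .attach (.attach ha (mjun_inv_unit hu)) hj⟩
      refine Deriv.equivL he ?_
      refine ((seqToPar u' a').fill (Ctx.parL .hole j)).equivR ?_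
      exact pcl (Str.Equiv.parComm u' a') j
    · intro V h
      exact ⟨.seq .unit V, Deriv.ofEquiv (Str.Equiv.seqUnitL V).symm,
        .seq (.refl .unit) h⟩
  | seqUnitR a =>
    constructor
    · intro V h
      obtain ⟨a', u', j, ha, hu, hj, he⟩ := mjun_inv_seq h
      refine ⟨.par (.par a' u') j, ?_,
        .attach (.attach ha (mjun_inv_unit hu)) hj⟩
      exact (Deriv.equivL he ((seqToPar a' u').fill (Ctx.parL .hole j)))
    · intro V h
      exact ⟨.seq V .unit, Deriv.ofEquiv (Str.Equiv.seqUnitR V).symm,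
        .seq h (.refl .unit)⟩
  | parCongr h1 h2 ih1 ih2 =>
    constructor
    · intro V h
      obtain ⟨x, y, j, hx, hy, hj, he⟩ := mjun_inv_par h
      obtain ⟨x', dx, hx'⟩ := ih1.1 x hx
      obtain ⟨y', dy, hy'⟩ := ih2.1 y hy
      refine ⟨.par (.par x' y') j, ?_, .attach (.par hx' hy') hj⟩
      refine Deriv.equivL he ?_
      exact (dx.fill (Ctx.parL (Ctx.parL .hole y) j)).trans
        (dy.fill (Ctx.parL (Ctx.parR x' .hole) j))
    · intro V h
      obtain ⟨x, y, j, hx, hy, hj, he⟩ := mjun_inv_par h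
      obtain ⟨x', dx, hx'⟩ := ih1.2 x hx
      obtain ⟨y', dy, hy'⟩ := ih2.2 y hy
      refine ⟨.par (.par x' y') j, ?_, .attach (.par hx' hy') hj⟩
      refine Deriv.equivL he ?_
      exact (dx.fill (Ctx.parL (Ctx.parL .hole y) j)).trans
        (dy.fill (Ctx.parL (Ctx.parR x' .hole) j))
  | tenCongr h1 h2 ih1 ih2 =>
    constructor
    · intro V h
      obtain ⟨x, y, j, hx, hy, hj, he⟩ := mjun_inv_ten h
      obtain ⟨x', dx, hx'⟩ := ih1.1 x hx
      obtain ⟨y', dy, hy'⟩ := ih2.1 y hy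
      refine ⟨.par (.ten x' y') j, ?_, .attach (.ten hx' hy') hj⟩
      refine Deriv.equivL he ?_
      exact (dx.fill (Ctx.parL (Ctx.tenL .hole y) j)).trans
        (dy.fill (Ctx.parL (Ctx.tenR x' .hole) j))
    · intro V h
      obtain ⟨x, y, j, hx, hy, hj, he⟩ := mjun_inv_ten h
      obtain ⟨x', dx, hx'⟩ := ih1.2 x hx
      obtain ⟨y', dy, hy'⟩ := ih2.2 y hy
      refine ⟨.par (.ten x' y') j, ?_, .attach (.ten hx' hy') hj⟩
      refine Deriv.equivL he ?_
      exact (dx.fill (Ctx.parL (Ctx.tenL .hole y) j)).trans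
        (dy.fill (Ctx.parL (Ctx.tenR x' .hole) j))
  | seqCongr h1 h2 ih1 ih2 =>
    constructor
    · intro V h
      obtain ⟨x, y, j, hx, hy, hj, he⟩ := mjun_inv_seq h
      obtain ⟨x', dx, hx'⟩ := ih1.1 x hx
      obtain ⟨y', dy, hy'⟩ := ih2.1 y hy
      refine ⟨.par (.seq x' y') j, ?_, .attach (.seq hx' hy') hj⟩
      refine Deriv.equivL he ?_
      exact (dx.fill (Ctx.parL (Ctx.seqL .hole y) j)).trans
        (dy.fill (Ctx.parL (Ctx.seqR x' .hole) j))
    · intro V h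
      obtain ⟨x, y, j, hx, hy, hj, he⟩ := mjun_inv_seq h
      obtain ⟨x', dx, hx'⟩ := ih1.2 x hx
      obtain ⟨y', dy, hy'⟩ := ih2.2 y hy
      refine ⟨.par (.seq x' y') j, ?_, .attach (.seq hx' hy') hj⟩
      refine Deriv.equivL he ?_
      exact (dx.fill (Ctx.parL (Ctx.seqL .hole y) j)).trans
        (dy.fill (Ctx.parL (Ctx.seqR x' .hole) j))
  | questCongr h1 ih1 =>
    constructor
    · intro V h
      obtain ⟨x, j, hx, hj, he⟩ := mjun_inv_quest h
      obtain ⟨x', dx, hx'⟩ := ih1.1 x hx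
      refine ⟨.par (.quest x') j, ?_, .attach (.quest hx') hj⟩
      exact Deriv.equivL he (dx.fill (Ctx.parL (Ctx.quest .hole) j))
    · intro V h
      obtain ⟨x, j, hx, hj, he⟩ := mjun_inv_quest h
      obtain ⟨x', dx, hx'⟩ := ih1.2 x hx
      refine ⟨.par (.quest x') j, ?_, .attach (.quest hx') hj⟩
      exact Deriv.equivL he (dx.fill (Ctx.parL (Ctx.quest .hole) j))
  | bangCongr h1 ih1 =>
    constructor
    · intro V h
      obtain ⟨x, j, hx, hj, he⟩ := mjun_inv_bang h
      obtain ⟨x', dx, hx'⟩ := ih1.1 x hx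
      refine ⟨.par (.bang x') j, ?_, .attach (.bang hx') hj⟩
      exact Deriv.equivL he (dx.fill (Ctx.parL (Ctx.bang .hole) j))
    · intro V h
      obtain ⟨x, j, hx, hj, he⟩ := mjun_inv_bang h
      obtain ⟨x', dx, hx'⟩ := ih1.2 x hx
      refine ⟨.par (.bang x') j, ?_, .attach (.bang hx') hj⟩
      exact Deriv.equivL he (dx.fill (Ctx.parL (Ctx.bang .hole) j))

/-- Transport of multi-insertions along the syntactic equivalence,
at the cost of some steps of the middle system. -/
lemma mjun_equiv {X Y V : Str} (h : Equiv X Y) (hm : MJun X V) :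
    ∃ V', Deriv msys V V' ∧ MJun Y V' := (mjun_equiv_aux h).1 V hm

/-! ### The junk relation and crossing outputs -/

/-- `JRel V X`: `V` is (up to ≡) a junked version of (something ≡ to) `X`. -/
def JRel (V X : Str) : Prop :=
  ∃ X₀ V₀, Equiv V V₀ ∧ MJun X₀ V₀ ∧ Equiv X₀ X

namespace JRel

lemma ofMJun {X V : Str} (h : MJun X V) : JRel V X :=
  ⟨X, V, erfl V, h, erfl X⟩

lemma refl (X : Str) : JRel X X := ofMJun (.refl X)

lemma equivL {V' V X : Str} (h : Equiv V' V) (hr : JRel V X) : JRel V' X := by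
  obtain ⟨X₀, V₀, h1, h2, h3⟩ := hr
  exact ⟨X₀, V₀, h.trans h1, h2, h3⟩

lemma equivR {V X X' : Str} (hr : JRel V X) (h : Equiv X X') : JRel V X' := by
  obtain ⟨X₀, V₀, h1, h2, h3⟩ := hr
  exact ⟨X₀, V₀, h1, h2, h3.trans h⟩

lemma toEUp {V X : Str} (hr : JRel V X) : Deriv eUp V X := by
  obtain ⟨X₀, V₀, h1, h2, h3⟩ := hr
  exact (Deriv.equivL h1 (mjun_eUp h2)).equivR h3

/-- Align the base of a junk relation with a given structure,
at the cost of middle-system steps. -/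
lemma align {V X Y : Str} (hr : JRel V X) (h : Equiv X Y) :
    ∃ V', Deriv msys V V' ∧ MJun Y V' := by
  obtain ⟨X₀, V₀, h1, h2, h3⟩ := hr
  obtain ⟨V', d, hm⟩ := mjun_equiv (h3.trans h) h2
  exact ⟨V', Deriv.equivL h1 d, hm⟩

end JRel

/-- Composing a multi-insertion below a junk relation. -/
lemma comp_mjun {Y Z V : Str} (hm : MJun Y Z) (hr : JRel V Z) :
    ∃ V', Deriv msys V V' ∧ MJun Y V' := by
  obtain ⟨V', d, hm'⟩ := hr.align (erfl Z)
  exact ⟨V', d, hm.trans hm'⟩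

@[simp] lemma topAttach_add (a b : ℕ) (x : Str) :
    topAttach a (topAttach b x) = topAttach (a + b) x := by
  induction a with
  | zero => simp [Nat.add_comm]
  | succ a ih =>
    show Str.par (topAttach a (topAttach b x)) bu = topAttach (a + 1 + b) x
    rw [Nat.add_right_comm a 1 b, ih]; rfl

/-- The result of crossing a junk relation over one inference step:
some e↓-instances at the very top, then middle-system steps, then junk. -/
def Out (V Y : Str) : Prop :=
  ∃ k V', Deriv msys (topAttach k V) V' ∧ JRel V' Y

namespace Out

lemma ofJRel {V Y : Str} (h : JRel V Y) : Out V Y := ⟨0, V, Deriv.rfl V, h⟩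

lemma stepL {V₁ V₂ Y : Str} (d : Deriv msys V₁ V₂) (h : Out V₂ Y) : Out V₁ Y := by
  obtain ⟨k, V', d2, hr⟩ := h
  exact ⟨k, V', (deriv_topAttach k d).trans d2, hr⟩

lemma equivL {V₁ V₂ Y : Str} (h : Equiv V₁ V₂) (ho : Out V₂ Y) : Out V₁ Y :=
  stepL (Deriv.ofEquiv h) ho

lemma equivR {V Y Y' : Str} (ho : Out V Y) (h : Equiv Y Y') : Out V Y' := by
  obtain ⟨k, V', d, hr⟩ := ho
  exact ⟨k, V', d, hr.equivR h⟩

/-- Replace the target by a less junked one. -/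
lemma mjunR {V Y Z : Str} (hm : MJun Y Z) (ho : Out V Z) : Out V Y := by
  obtain ⟨k, V', d, hr⟩ := ho
  obtain ⟨V'', d2, hm'⟩ := comp_mjun hm hr
  exact ⟨k, V'', d.trans d2, JRel.ofMJun hm'⟩

/-- Add one e↓ supply at the top. -/
lemma consT {V Y : Str} (h : Out (.par V bu) Y) : Out V Y := by
  obtain ⟨k, V', d, hr⟩ := h
  refine ⟨k + 1, V', Deriv.equivL ?_ d, hr⟩
  show Equiv (.par (topAttach k V) bu) _
  exact (topAttach_par k V).symm

end Out

/-! ### jCtx lemmas -/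

lemma jCtx_comp (C D : Ctx) : jCtx (C.comp D) = (jCtx C).comp (jCtx D) := by
  induction C <;> simp [Ctx.comp, jCtx, *]

lemma mjun_jCtx (C : Ctx) {y y' : Str} (h : MJun y y') :
    MJun (C.fill y) ((jCtx C).fill y') := by
  induction C with
  | hole => exact h
  | parL C T ih => exact .par ih (.refl T)
  | parR T C ih => exact .par (.refl T) ih
  | tenL C T ih => exact .ten ih (.refl T)
  | tenR T C ih => exact .ten (.refl T) ih
  | seqL C T ih => exact .seq ih (.refl T)
  | seqR T C ih => exact .seq (.refl T) ih
  | quest C ih => exact .quest ih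
  | bang C ih => exact .bang (.attach ih (Junk.quest .unit))

/-! ### Normalising junk to `?∘` piles -/

/-- Piles built from `∘` and `?∘`. -/
inductive QPile : Str → Prop
  | unit : QPile .unit
  | qu : QPile qu
  | par {a b} : QPile a → QPile b → QPile (.par a b)

lemma qpile_junk {p : Str} (h : QPile p) : Junk p := by
  induction h with
  | unit => exact .unit
  | qu => exact .quest .unit
  | par _ _ ih1 ih2 => exact .par ih1 ih2

/-- `?∘ ⅋ ?∘ → ?∘` in the middle system. -/
lemma ququ_qu : Deriv msys (.par qu qu) qu := by
  -- create ??∘ , absorb both, dig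
  refine (Deriv.single (mkStep (Ctx.parL .hole (.par qu qu))
    (msys_wDown (wDown.mk qu)) (Str.Equiv.parUnit _).symm (erfl _))).trans ?_
  -- ?(?∘) ⅋ (?∘ ⅋ ?∘) ≡ (?(?∘) ⅋ ?∘) ⅋ ?∘  →b↓  ?(?∘) ⅋ ?∘ →b↓ ?(?∘) →g↓ ?∘
  refine Deriv.equivL (Str.Equiv.parAssoc _ qu qu).symm ?_
  refine (Deriv.single (mkStep (Ctx.parL .hole qu)
    (msys_bDown (bDown.mk qu)) (erfl _) (erfl _))).trans ?_
  refine (Deriv.single (mkStep' (msys_bDown (bDown.mk qu)))).trans ?_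
  exact Deriv.single (mkStep' (msys_gDown (gDown.mk .unit)))

/-- Any `?∘`-pile collapses to `∘` or to `?∘`. -/
lemma qpile_collapse {p : Str} (h : QPile p) :
    ∃ c, (c = Str.unit ∨ c = qu) ∧ Deriv msys p c := by
  induction h with
  | unit => exact ⟨.unit, Or.inl rfl, Deriv.rfl _⟩
  | qu => exact ⟨qu, Or.inr rfl, Deriv.rfl _⟩
  | par h1 h2 ih1 ih2 =>
    obtain ⟨c1, hc1, d1⟩ := ih1
    obtain ⟨c2, hc2, d2⟩ := ih2
    have d : Deriv msys _ (.par c1 c2) :=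
      (d1.fill (Ctx.parL .hole _)).trans (d2.fill (Ctx.parR c1 .hole))
    rcases hc1 with rfl | rfl
    · exact ⟨c2, hc2, d.equivR (Str.Equiv.parUnit c2)⟩
    · rcases hc2 with rfl | rfl
      · exact ⟨qu, Or.inr rfl, d.equivR (Str.Equiv.parUnitR qu)⟩
      · exact ⟨qu, Or.inr rfl, d.trans ququ_qu⟩

/-- Any junk reduces in the middle system to a `?∘`-pile. -/
lemma junkToQPile {j : Str} (h : Junk j) :
    ∃ p, QPile p ∧ Deriv msys j p := by
  induction h with
  | unit => exact ⟨.unit, .unit, Deriv.rfl _⟩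
  | par h1 h2 ih1 ih2 =>
    obtain ⟨p1, hp1, d1⟩ := ih1
    obtain ⟨p2, hp2, d2⟩ := ih2
    exact ⟨.par p1 p2, .par hp1 hp2,
      (d1.fill (Ctx.parL .hole _)).trans (d2.fill (Ctx.parR p1 .hole))⟩
  | ten h1 h2 ih1 ih2 =>
    obtain ⟨p1, hp1, d1⟩ := ih1
    obtain ⟨p2, hp2, d2⟩ := ih2
    exact ⟨.par p1 p2, .par hp1 hp2,
      ((tenToPar _ _).trans (d1.fill (Ctx.parL .hole _))).trans
        (d2.fill (Ctx.parR p1 .hole))⟩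
  | seq h1 h2 ih1 ih2 =>
    obtain ⟨p1, hp1, d1⟩ := ih1
    obtain ⟨p2, hp2, d2⟩ := ih2
    exact ⟨.par p1 p2, .par hp1 hp2,
      ((seqToPar _ _).trans (d1.fill (Ctx.parL .hole _))).trans
        (d2.fill (Ctx.parR p1 .hole))⟩
  | quest h1 ih1 =>
    obtain ⟨p1, hp1, d1⟩ := ih1
    obtain ⟨c, hc, dc⟩ := qpile_collapse hp1
    refine ⟨qu, .qu, ((d1.fill (Ctx.quest .hole)).trans
      (dc.fill (Ctx.quest .hole))).trans ?_⟩
    rcases hc with rfl | rfl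
    · exact Deriv.rfl qu
    · exact Deriv.single (mkStep' (msys_gDown (gDown.mk .unit)))

/-! ### The generic crossing wrapper -/

lemma jl_gen {a b : Str}
    (hole : ∀ (D : Ctx) (V : Str), MJun a V → Out (D.fill V) (D.fill b)) :
    ∀ (C D : Ctx) (V : Str), MJun (C.fill a) V →
      Out (D.fill V) (D.fill (C.fill b)) := by
  intro C
  induction C with
  | hole => exact hole
  | parL C' T ih =>
    intro D V h
    simp only [Ctx.fill] at h ⊢
    obtain ⟨x, t', j, hx, ht, hj, he⟩ := mjun_inv_par h
    have key := ih (D.comp (Ctx.parL (Ctx.parL .hole t') j)) x hx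
    simp only [Ctx.fill_comp, Ctx.fill] at key
    refine Out.equivL (D.fill_congr he) (Out.mjunR ?_ key)
    exact MJun.fill D (.attach (.par (.refl _) ht) hj)
  | parR T C' ih =>
    intro D V h
    simp only [Ctx.fill] at h ⊢
    obtain ⟨t', x, j, ht, hx, hj, he⟩ := mjun_inv_par h
    have key := ih (D.comp (Ctx.parL (Ctx.parR t' .hole) j)) x hx
    simp only [Ctx.fill_comp, Ctx.fill] at key
    refine Out.equivL (D.fill_congr he) (Out.mjunR ?_ key)
    exact MJun.fill D (.attach (.par ht (.refl _)) hj)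
  | tenL C' T ih =>
    intro D V h
    simp only [Ctx.fill] at h ⊢
    obtain ⟨x, t', j, hx, ht, hj, he⟩ := mjun_inv_ten h
    have key := ih (D.comp (Ctx.parL (Ctx.tenL .hole t') j)) x hx
    simp only [Ctx.fill_comp, Ctx.fill] at key
    refine Out.equivL (D.fill_congr he) (Out.mjunR ?_ key)
    exact MJun.fill D (.attach (.ten (.refl _) ht) hj)
  | tenR T C' ih =>
    intro D V h
    simp only [Ctx.fill] at h ⊢
    obtain ⟨t', x, j, ht, hx, hj, he⟩ := mjun_inv_ten h
    have key := ih (D.comp (Ctx.parL (Ctx.tenR t' .hole) j)) x hx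
    simp only [Ctx.fill_comp, Ctx.fill] at key
    refine Out.equivL (D.fill_congr he) (Out.mjunR ?_ key)
    exact MJun.fill D (.attach (.ten ht (.refl _)) hj)
  | seqL C' T ih =>
    intro D V h
    simp only [Ctx.fill] at h ⊢
    obtain ⟨x, t', j, hx, ht, hj, he⟩ := mjun_inv_seq h
    have key := ih (D.comp (Ctx.parL (Ctx.seqL .hole t') j)) x hx
    simp only [Ctx.fill_comp, Ctx.fill] at key
    refine Out.equivL (D.fill_congr he) (Out.mjunR ?_ key)
    exact MJun.fill D (.attach (.seq (.refl _) ht) hj)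
  | seqR T C' ih =>
    intro D V h
    simp only [Ctx.fill] at h ⊢
    obtain ⟨t', x, j, ht, hx, hj, he⟩ := mjun_inv_seq h
    have key := ih (D.comp (Ctx.parL (Ctx.seqR t' .hole) j)) x hx
    simp only [Ctx.fill_comp, Ctx.fill] at key
    refine Out.equivL (D.fill_congr he) (Out.mjunR ?_ key)
    exact MJun.fill D (.attach (.seq ht (.refl _)) hj)
  | quest C' ih =>
    intro D V h
    simp only [Ctx.fill] at h ⊢
    obtain ⟨x, j, hx, hj, he⟩ := mjun_inv_quest h
    have key := ih (D.comp (Ctx.parL (Ctx.quest .hole) j)) x hx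
    simp only [Ctx.fill_comp, Ctx.fill] at key
    refine Out.equivL (D.fill_congr he) (Out.mjunR ?_ key)
    exact MJun.fill D (.attach (.quest (.refl _)) hj)
  | bang C' ih =>
    intro D V h
    simp only [Ctx.fill] at h ⊢
    obtain ⟨x, j, hx, hj, he⟩ := mjun_inv_bang h
    have key := ih (D.comp (Ctx.parL (Ctx.bang .hole) j)) x hx
    simp only [Ctx.fill_comp, Ctx.fill] at key
    refine Out.equivL (D.fill_congr he) (Out.mjunR ?_ key)
    exact MJun.fill D (.attach (.bang (.refl _)) hj)

/-! ### The hole lemmas -/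

lemma wDown_le_msys : (wDown : Rules) ≤ msys := fun _ _ => msys_wDown

lemma Deriv.fillDE {r : Rules} (D E : Ctx) {a b : Str} (h : Deriv r a b) :
    Deriv r (D.fill (E.fill a)) (D.fill (E.fill b)) := by
  simpa using h.fill (D.comp E)

/-- Deep step builder through a composite context. -/
lemma stepDE {r : Rules} {a b X Y : Str} (D E : Ctx) (hr : r a b)
    (h1 : Equiv X (D.fill (E.fill a))) (h2 : Equiv (D.fill (E.fill b)) Y) :
    Step r X Y :=
  mkStep (D.comp E) hr (by simpa using h1) (by simpa using h2)

/-- `(x ⅋ a) ⅋ (y ⅋ b) ≡ (x ⅋ y) ⅋ (a ⅋ b)`. -/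
lemma ac4 (x a y b : Str) :
    Equiv (.par (.par x a) (.par y b)) (.par (.par x y) (.par a b)) := by
  refine (Str.Equiv.parAssoc x a (.par y b)).trans ?_
  refine (pcr x (((Str.Equiv.parAssoc a y b).symm.trans
    (pcl (Str.Equiv.parComm a y) b)).trans (Str.Equiv.parAssoc y a b))).trans ?_
  exact (Str.Equiv.parAssoc x y (.par a b)).symm

section Holes
variable (D : Ctx) (V : Str)

lemma hole_aiDown (n : ℕ) (bo : Bool) (h : MJun .unit V) :
    Out (D.fill V) (D.fill (.par (.atom n bo) (.atom n (!bo)))) := by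
  have hj := mjun_inv_unit h
  refine Out.stepL (Deriv.single (stepDE D (Ctx.parL .hole V)
    (msys_aiDown (aiDown.mk n bo))
    (D.fill_congr (Str.Equiv.parUnit V).symm) (erfl _))) ?_
  exact Out.ofJRel (JRel.ofMJun (MJun.fill D (.attach (.refl _) hj)))

lemma hole_wDown (R : Str) (h : MJun .unit V) :
    Out (D.fill V) (D.fill (.quest R)) := by
  have hj := mjun_inv_unit h
  refine Out.stepL (Deriv.single (stepDE D (Ctx.parL .hole V)
    (msys_wDown (wDown.mk R))
    (D.fill_congr (Str.Equiv.parUnit V).symm) (erfl _))) ?_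
  exact Out.ofJRel (JRel.ofMJun (MJun.fill D (.attach (.refl _) hj)))

lemma hole_eDown (h : MJun .unit V) :
    Out (D.fill V) (D.fill bu) := by
  have hj := mjun_inv_unit h
  refine Out.consT (Out.stepL (carry D V) (Out.ofJRel ?_))
  exact ⟨D.fill bu, (jCtx D).fill (.par bu V),
    (jCtx D).fill_congr (Str.Equiv.parComm V bu),
    mjun_jCtx D (.attach (.refl bu) hj), erfl _⟩

lemma hole_aiUp (n : ℕ) (bo : Bool)
    (h : MJun (.ten (.atom n bo) (.atom n (!bo))) V) :
    Out (D.fill V) (D.fill .unit) := by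
  obtain ⟨x, y, j, hx, hy, hj, he⟩ := mjun_inv_ten h
  obtain ⟨j1, hj1, hex⟩ := mjun_inv_atom hx
  obtain ⟨j2, hj2, hey⟩ := mjun_inv_atom hy
  set A : Str := .atom n bo
  set A' : Str := .atom n (!bo)
  refine Out.stepL (Deriv.single (stepDE D (Ctx.parL .hole j)
    (msys_sw (sw.mk A j1 y))
    (D.fill_congr (he.trans (pcl (tcl hex y) j))) (erfl _))) ?_
  refine Out.stepL (Deriv.single (stepDE D (Ctx.parL (Ctx.parL .hole j1) j)
    (msys_sw (sw.mk A' j2 A))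
    (D.fill_congr (pcl (pcl ((tcr A hey).trans (Str.Equiv.tenComm A _)) j1) j))
    (D.fill_congr (pcl (pcl (pcl (Str.Equiv.tenComm A' A) j2) j1) j)))) ?_
  refine Out.stepL (Deriv.single (stepDE D (Ctx.parL (Ctx.parL (Ctx.parL .hole j2) j1) j)
    (msys_aiUp (aiUp.mk n bo)) (erfl _) (erfl _))) ?_
  exact Out.ofJRel (JRel.ofMJun (MJun.fill D
    (.attach (.attach (.attach (.refl _) hj2) hj1) hj)))

lemma hole_sw (R U T : Str) (h : MJun (.ten (.par R U) T) V) :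
    Out (D.fill V) (D.fill (.par (.ten R T) U)) := by
  obtain ⟨p, t', j, hp, ht, hj, he⟩ := mjun_inv_ten h
  obtain ⟨r', u', j2, hr, hu, hj2, he2⟩ := mjun_inv_par hp
  refine Out.stepL (Deriv.single (stepDE D (Ctx.parL .hole j)
    (msys_sw (sw.mk r' (.par u' j2) t'))
    (D.fill_congr (he.trans
      (pcl (tcl (he2.trans (Str.Equiv.parAssoc r' u' j2)) t') j)))
    (erfl _))) ?_
  exact Out.ofJRel (JRel.ofMJun (MJun.fill D
    (.attach (.par (.ten hr ht) (.attach hu hj2)) hj)))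

lemma hole_wUp (R : Str) (h : MJun (.bang R) V) :
    Out (D.fill V) (D.fill .unit) := by
  obtain ⟨x, j, hx, hj, he⟩ := mjun_inv_bang h
  refine Out.stepL (Deriv.single (stepDE D (Ctx.parL .hole j)
    (msys_wUp (wUp.mk x)) (D.fill_congr he) (erfl _))) ?_
  exact Out.ofJRel (JRel.ofMJun (MJun.fill D (.attach (.refl _) hj)))

lemma hole_bUp (R : Str) (h : MJun (.bang R) V) :
    Out (D.fill V) (D.fill (.ten (.bang R) R)) := by
  obtain ⟨x, j, hx, hj, he⟩ := mjun_inv_bang h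
  refine Out.stepL (Deriv.single (stepDE D (Ctx.parL .hole j)
    (msys_bUp (bUp.mk x)) (D.fill_congr he) (erfl _))) ?_
  exact Out.ofJRel (JRel.ofMJun (MJun.fill D
    (.attach (.ten (.bang hx) hx) hj)))

lemma hole_gUp (R : Str) (h : MJun (.bang R) V) :
    Out (D.fill V) (D.fill (.bang (.bang R))) := by
  obtain ⟨x, j, hx, hj, he⟩ := mjun_inv_bang h
  refine Out.stepL (Deriv.single (stepDE D (Ctx.parL .hole j)
    (msys_gUp (gUp.mk x)) (D.fill_congr he) (erfl _))) ?_
  exact Out.ofJRel (JRel.ofMJun (MJun.fill D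
    (.attach (.bang (.bang hx)) hj)))

lemma hole_pDown (R T : Str) (h : MJun (.bang (.par R T)) V) :
    Out (D.fill V) (D.fill (.par (.bang R) (.quest T))) := by
  obtain ⟨x, j, hx, hj, he⟩ := mjun_inv_bang h
  obtain ⟨r', t', j2, hr, ht, hj2, he2⟩ := mjun_inv_par hx
  refine Out.stepL (Deriv.single (stepDE D (Ctx.parL .hole j)
    (msys_pDown (pDown.mk r' (.par t' j2)))
    (D.fill_congr (he.trans (pcl (Str.Equiv.bangCongr
      (he2.trans (Str.Equiv.parAssoc r' t' j2))) j)))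
    (erfl _))) ?_
  exact Out.ofJRel (JRel.ofMJun (MJun.fill D
    (.attach (.par (.bang hr) (.quest (.attach ht hj2))) hj)))

lemma hole_bDown (R : Str) (h : MJun (.par (.quest R) R) V) :
    Out (D.fill V) (D.fill (.quest R)) := by
  obtain ⟨x, y, j, hx, hy, hj, he⟩ := mjun_inv_par h
  obtain ⟨r₁, j2, hr1, hj2, hex⟩ := mjun_inv_quest hx
  obtain ⟨w, hw, d1, d2⟩ := mjun_join hr1 hy
  -- V ≡ (((?r₁ ⅋ y) ⅋ j2) ⅋ j)
  refine Out.equivL (D.fill_congr (he.trans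
    (pcl ((pcl hex y).trans (pswap23 (.quest r₁) j2 y)) j))) ?_
  refine Out.stepL ((d1.mono wDown_le_msys).fillDE D
    (Ctx.parL (Ctx.parL (Ctx.parL (Ctx.quest .hole) y) j2) j)) ?_
  refine Out.stepL ((d2.mono wDown_le_msys).fillDE D
    (Ctx.parL (Ctx.parL (Ctx.parR (.quest w) .hole) j2) j)) ?_
  refine Out.stepL (Deriv.single (stepDE D (Ctx.parL (Ctx.parL .hole j2) j)
    (msys_bDown (bDown.mk w)) (erfl _) (erfl _))) ?_
  exact Out.ofJRel (JRel.ofMJun (MJun.fill D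
    (.attach (.attach (.quest hw) hj2) hj)))

lemma hole_qDown (R T U W : Str)
    (h : MJun (.par (.seq R T) (.seq U W)) V) :
    Out (D.fill V) (D.fill (.seq (.par R U) (.par T W))) := by
  obtain ⟨p, q, j, hp, hq, hj, he⟩ := mjun_inv_par h
  obtain ⟨r', t', j2, hr, ht, hj2, he2⟩ := mjun_inv_seq hp
  obtain ⟨u', w', j3, hu, hw, hj3, he3⟩ := mjun_inv_seq hq
  refine Out.stepL (Deriv.single (stepDE D (Ctx.parL (Ctx.parL .hole (.par j2 j3)) j)
    (msys_qDown (qDown.mk r' t' u' w'))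
    (D.fill_congr (he.trans
      ((pcl (Str.Equiv.parCongr he2 he3) j).trans
        (pcl (ac4 (.seq r' t') j2 (.seq u' w') j3) j))))
    (erfl _))) ?_
  exact Out.ofJRel (JRel.ofMJun (MJun.fill D
    (.attach (.attach (.seq (.par hr hu) (.par ht hw)) (.par hj2 hj3)) hj)))

lemma hole_qUp (R T U W : Str)
    (h : MJun (.seq (.ten R T) (.ten U W)) V) :
    Out (D.fill V) (D.fill (.ten (.seq R U) (.seq T W))) := by
  obtain ⟨p, q, j, hp, hq, hj, he⟩ := mjun_inv_seq h
  obtain ⟨r', t', j2, hr, ht, hj2, he2⟩ := mjun_inv_ten hp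
  obtain ⟨u', w', j3, hu, hw, hj3, he3⟩ := mjun_inv_ten hq
  refine Out.equivL (D.fill_congr (he.trans
    (pcl (Str.Equiv.seqCongr he2 he3) j))) ?_
  -- convert the two ⅋-attached junks to ⊗ and associate them inside
  refine Out.stepL ((parToTen (.ten r' t') j2).fillDE D
    (Ctx.parL (Ctx.seqL .hole (.par (.ten u' w') j3)) j)) ?_
  refine Out.stepL ((parToTen (.ten u' w') j3).fillDE D
    (Ctx.parL (Ctx.seqR (.ten (.ten r' t') j2) .hole) j)) ?_
  refine Out.stepL (Deriv.single (stepDE D (Ctx.parL .hole j)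
    (msys_qUp (qUp.mk r' (.ten t' j2) u' (.ten w' j3)))
    (D.fill_congr (pcl (Str.Equiv.seqCongr
      (Str.Equiv.tenAssoc r' t' j2) (Str.Equiv.tenAssoc u' w' j3)) j))
    (erfl _))) ?_
  -- convert the junks back to ⅋
  refine Out.stepL ((tenToPar t' j2).fillDE D
    (Ctx.parL (Ctx.tenR (.seq r' u') (Ctx.seqL .hole (.ten w' j3))) j)) ?_
  refine Out.stepL ((tenToPar w' j3).fillDE D
    (Ctx.parL (Ctx.tenR (.seq r' u') (Ctx.seqR (.par t' j2) .hole)) j)) ?_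
  exact Out.ofJRel (JRel.ofMJun (MJun.fill D
    (.attach (.ten (.seq hr hu) (.seq (.attach ht hj2) (.attach hw hj3))) hj)))

lemma hole_pUp (T R : Str) (h : MJun (.ten (.quest T) (.bang R)) V) :
    Out (D.fill V) (D.fill (.quest (.ten T R))) := by
  obtain ⟨x, y, j, hx, hy, hj, he⟩ := mjun_inv_ten h
  obtain ⟨t', j2, ht, hj2, hex⟩ := mjun_inv_quest hx
  obtain ⟨r', j3, hr, hj3, hey⟩ := mjun_inv_bang hy
  refine Out.stepL (Deriv.single (stepDE D (Ctx.parL .hole j)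
    (msys_sw (sw.mk (.quest t') j2 y))
    (D.fill_congr (he.trans (pcl (tcl hex y) j))) (erfl _))) ?_
  refine Out.stepL (Deriv.single (stepDE D (Ctx.parL (Ctx.parL .hole j2) j)
    (msys_sw (sw.mk (.bang r') j3 (.quest t')))
    (D.fill_congr (pcl (pcl ((tcr (.quest t') hey).trans
      (Str.Equiv.tenComm (.quest t') _)) j2) j))
    (D.fill_congr (pcl (pcl (pcl (Str.Equiv.tenComm (.bang r') (.quest t')) j3) j2) j)))) ?_
  refine Out.stepL (Deriv.single (stepDE D (Ctx.parL (Ctx.parL (Ctx.parL .hole j3) j2) j)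
    (msys_pUp (pUp.mk t' r')) (erfl _) (erfl _))) ?_
  exact Out.ofJRel (JRel.ofMJun (MJun.fill D
    (.attach (.attach (.attach (.quest (.ten ht hr)) hj3) hj2) hj)))

lemma hole_gDown (R : Str) (h : MJun (.quest (.quest R)) V) :
    Out (D.fill V) (D.fill (.quest R)) := by
  obtain ⟨x, j, hx, hj, he⟩ := mjun_inv_quest h
  obtain ⟨r₁, j2, hr, hj2, he2⟩ := mjun_inv_quest hx
  obtain ⟨p, hp, dp⟩ := junkToQPile hj2
  obtain ⟨c, hc, dc⟩ := qpile_collapse hp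
  have dj : Deriv msys j2 c := dp.trans dc
  have base : Equiv (D.fill V)
      (D.fill (.par (.quest (.par (.quest r₁) j2)) j)) :=
    D.fill_congr (he.trans (pcl (Str.Equiv.questCongr he2) j))
  rcases hc with rfl | rfl
  · -- the junk inside collapses to ∘
    refine Out.equivL base ?_
    refine Out.stepL (dj.fillDE D
      (Ctx.parL (Ctx.quest (Ctx.parR (.quest r₁) .hole)) j)) ?_
    refine Out.equivL (D.fill_congr (pcl
      (Str.Equiv.questCongr (Str.Equiv.parUnitR (.quest r₁))) j)) ?_
    refine Out.stepL (Deriv.single (stepDE D (Ctx.parL .hole j)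
      (msys_gDown (gDown.mk r₁)) (erfl _) (erfl _))) ?_
    exact Out.ofJRel (JRel.ofMJun (MJun.fill D (.attach (.quest hr) hj)))
  · -- the junk inside collapses to ?∘ : supply a !∘ from the top and absorb
    refine Out.consT ?_
    refine Out.equivL (pcl base bu) ?_
    have d2 : Deriv msys
        (.par (D.fill (.par (.quest (.par (.quest r₁) j2)) j)) bu)
        (.par (D.fill (.par (.quest (.par (.quest r₁) qu)) j)) bu) := by
      simpa [Ctx.fill] using dj.fill (Ctx.parL
        (D.comp (Ctx.parL (Ctx.quest (Ctx.parR (.quest r₁) .hole)) j)) bu)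
    refine Out.stepL d2 ?_
    have d3 : Deriv msys
        (.par (D.fill (.par (.quest (.par (.quest r₁) qu)) j)) bu)
        ((jCtx D).fill (.par (.quest (.par (.quest r₁) (.par qu bu))) j)) := by
      have h3 := carry
        (D.comp (Ctx.parL (Ctx.quest (Ctx.parR (.quest r₁) .hole)) j)) qu
      simpa [jCtx_comp, jCtx, Ctx.fill] using h3
    refine Out.stepL d3 ?_
    refine Out.stepL ((parToTen qu bu).fillDE (jCtx D)
      (Ctx.parL (Ctx.quest (Ctx.parR (.quest r₁) .hole)) j)) ?_
    refine Out.equivL ((jCtx D).fill_congr (pcl (Str.Equiv.questCongr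
      (Str.Equiv.parComm (.quest r₁) (.ten qu bu))) j)) ?_
    refine Out.stepL ((absorb r₁).fillDE (jCtx D)
      (Ctx.parL (Ctx.quest .hole) j)) ?_
    refine Out.stepL (Deriv.single (stepDE (jCtx D) (Ctx.parL .hole j)
      (msys_gDown (gDown.mk r₁)) (erfl _) (erfl _))) ?_
    exact Out.ofJRel (JRel.ofMJun (mjun_jCtx D (.attach (.quest hr) hj)))

end Holes

/-! ### The crossing lemmas and the decomposition -/

/-- Crossing a middle-system or e↓ step below a junk relation. -/
lemma jlm_core {V X X' : Str} (hr : JRel V X) {C : Ctx} {a b : Str}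
    (hab : msys a b ∨ eDown a b)
    (h1 : Equiv X (C.fill a)) (h2 : Equiv (C.fill b) X') :
    Out V X' := by
  obtain ⟨V₁, d, hm⟩ := hr.align h1
  refine Out.stepL d (Out.equivR ?_ h2)
  rcases hab with hab | hab
  · rcases msys_cases hab with h|h|h|h|h|h|h|h|h|h|h|h|h
    · cases h with | mk n bo =>
        exact jl_gen (fun D V h => hole_aiDown D V n bo h) C .hole V₁ hm
    · cases h with | mk n bo =>
        exact jl_gen (fun D V h => hole_aiUp D V n bo h) C .hole V₁ hm
    · cases h with | mk R U T =>
        exact jl_gen (fun D V h => hole_sw D V R U T h) C .hole V₁ hm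
    · cases h with | mk R T U W =>
        exact jl_gen (fun D V h => hole_qDown D V R T U W h) C .hole V₁ hm
    · cases h with | mk R T U W =>
        exact jl_gen (fun D V h => hole_qUp D V R T U W h) C .hole V₁ hm
    · cases h with | mk R T =>
        exact jl_gen (fun D V h => hole_pDown D V R T h) C .hole V₁ hm
    · cases h with | mk T R =>
        exact jl_gen (fun D V h => hole_pUp D V T R h) C .hole V₁ hm
    · cases h with | mk R =>
        exact jl_gen (fun D V h => hole_wDown D V R h) C .hole V₁ hm
    · cases h with | mk R =>
        exact jl_gen (fun D V h => hole_wUp D V R h) C .hole V₁ hm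
    · cases h with | mk R =>
        exact jl_gen (fun D V h => hole_bDown D V R h) C .hole V₁ hm
    · cases h with | mk R =>
        exact jl_gen (fun D V h => hole_bUp D V R h) C .hole V₁ hm
    · cases h with | mk R =>
        exact jl_gen (fun D V h => hole_gDown D V R h) C .hole V₁ hm
    · cases h with | mk R =>
        exact jl_gen (fun D V h => hole_gUp D V R h) C .hole V₁ hm
  · cases hab with | mk =>
      exact jl_gen (fun D V h => hole_eDown D V h) C .hole V₁ hm

/-- Crossing an e↑ step below a junk relation: the removed `?∘` simply joins
the junk. -/
lemma jlm_eUp {V X X' : Str} (hr : JRel V X) {C : Ctx}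
    (h1 : Equiv X (C.fill qu)) (h2 : Equiv (C.fill .unit) X') :
    ∃ V', Deriv msys V V' ∧ JRel V' X' := by
  obtain ⟨V₁, d, hm⟩ := hr.align h1
  obtain ⟨V₂, d2, hm2⟩ :=
    mjun_equiv (C.fill_congr (Str.Equiv.parUnit qu).symm) hm
  have hm3 : MJun (C.fill .unit) (C.fill (.par .unit qu)) :=
    MJun.fill C (.attach (.refl _) (.quest .unit))
  exact ⟨V₂, d.trans d2, (JRel.ofMJun (hm3.trans hm2)).equivR h2⟩

/-- Processing one step of the original derivation. -/
lemma process_step {T X X' V : Str} {k : ℕ}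
    (d : Deriv msys (topAttach k T) V) (hr : JRel V X) (hs : Step snel X X') :
    ∃ k' V', Deriv msys (topAttach k' T) V' ∧ JRel V' X' := by
  obtain ⟨P', Q', h1, ⟨C, a, b, hab, rfl, rfl⟩, h2⟩ := hs
  rcases snel_cases hab with hm | he | he
  · obtain ⟨k2, V', d2, hr'⟩ := jlm_core hr (Or.inl hm) h1 h2
    refine ⟨k2 + k, V', ?_, hr'⟩
    refine (Deriv.equivL ?_ (deriv_topAttach k2 d)).trans d2
    rw [topAttach_add]; exact erfl _
  · cases he with | mk =>
      obtain ⟨k2, V', d2, hr'⟩ := jlm_core hr (Or.inr eDown.mk) h1 h2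
      refine ⟨k2 + k, V', ?_, hr'⟩
      refine (Deriv.equivL ?_ (deriv_topAttach k2 d)).trans d2
      rw [topAttach_add]; exact erfl _
  · cases he with | mk =>
      obtain ⟨V', d2, hr'⟩ := jlm_eUp hr h1 h2
      exact ⟨k, V', d.trans d2, hr'⟩

/-- Every SNEL derivation from T to R can be transformed into
a derivation using (top-down) first only e↓, then only rules of
SNEL \ {e↓, e↑}, then only e↑. -/
theorem empty_rules_decomposition :
    ∀ T R : Str, Deriv snel T R →
      ∃ P Q : Str,
        Deriv eDown T P ∧
        Deriv (aiDown ⊔ aiUp ⊔ sw ⊔ qDown ⊔ qUp ⊔ pDown ⊔ pUp ⊔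
            wDown ⊔ wUp ⊔ bDown ⊔ bUp ⊔ gDown ⊔ gUp) P Q ∧
        Deriv eUp Q R := by
  intro T R h
  rcases h with heq | htg
  · exact ⟨T, R, Deriv.rfl T, Deriv.ofEquiv heq, Deriv.rfl R⟩
  · suffices h : ∃ k V, Deriv msys (topAttach k T) V ∧ JRel V R by
      obtain ⟨k, V, d, hr⟩ := h
      exact ⟨topAttach k T, V, eDown_topAttach k T, d, hr.toEUp⟩
    induction htg with
    | single hs =>
      obtain ⟨k', V', d', hr'⟩ :=
        process_step (Deriv.rfl (topAttach 0 T)) (JRel.refl T) hs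
      exact ⟨k', V', d', hr'⟩
    | tail hp hs ih =>
      obtain ⟨k, V, d, hr⟩ := ih
      obtain ⟨k', V', d', hr'⟩ := process_step d hr hs
      exact ⟨k', V', d', hr'⟩
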